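/- arXiv:2012.10363 — 9 statements merged into one kernel-verified Lean document; each statement's English description precedes it below -/
import Mathlib

section
/- Let b, m, s be integers with b ≥ s ≥ 1 and m ≥ 1, and let P be a (0,m,s)-net in base b with n = b^m points. Let J ⊆ {1,…,s} be nonempty and let k, d ∈ ℕ^s satisfy m ≥ |k| + |d|_J + 2|J|, where |k| := Σ_{j=1}^s k_j and |d|_J := Σ_{j∈J} d_j. Then for every point u_i of P, the weighted sum of counting numbers relative to u_i satisfies tilde-m_b(k,d,J;P) ≤ (b^m/(b^m−1)) · (2^{|J|} − b^{|k|+|d|_J+2|J|−m})/2^{|J|} ≤ 1. -/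
open Finset
open scoped Classical

/-- `γ_b(x,y)`: the exact number of initial common base-`b` digits of `x, y ∈ [0,1)`,
i.e. the unique `i ≥ 0` with `⌊b^i x⌋ = ⌊b^i y⌋` but `⌊b^{i+1} x⌋ ≠ ⌊b^{i+1} y⌋`
when `x ≠ y`, and `∞` when `x = y`. -/
noncomputable def gammaB (b : ℕ) (x y : ℝ) : ℕ∞ :=
  if x = y then ⊤
  else ((sInf {i : ℕ | ⌊(b : ℝ) ^ i * x⌋ = ⌊(b : ℝ) ^ i * y⌋ ∧
      ⌊(b : ℝ) ^ (i + 1) * x⌋ ≠ ⌊(b : ℝ) ^ (i + 1) * y⌋} : ℕ) : ℕ∞)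

/-- A `(0,m,s)`-net in base `b`: `n = b^m` points of `[0,1)^s` such that every elementary
interval `∏_j [a_j b^{−k_j}, (a_j+1) b^{−k_j})` with `Σ_j k_j = m` and `0 ≤ a_j < b^{k_j}`
contains exactly one point. -/
def IsNet (b m s : ℕ) (P : Fin (b ^ m) → Fin s → ℝ) : Prop :=
  (∀ i j, P i j ∈ Set.Ico (0 : ℝ) 1) ∧
  ∀ k a : Fin s → ℕ, (∑ j, k j) = m → (∀ j, a j < b ^ k j) →
    ∃! i : Fin (b ^ m), ∀ j, P i j ∈
      Set.Ico ((a j : ℝ) * (b : ℝ) ^ (-(k j : ℤ))) (((a j : ℝ) + 1) * (b : ℝ) ^ (-(k j : ℤ)))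

/-- The counting number `m_b(k,d,c,J,I;P)` relative to the point `u_i`: the number of
indices `ℓ ≠ i` with `γ_b(u_{i,j},u_{ℓ,j}) ≥ k_j+d_j+c` for `j ∈ I`,
`γ_b(u_{i,j},u_{ℓ,j}) ≥ k_j` for `j ∈ Jᶜ`, and `γ_b(u_{i,j},u_{ℓ,j}) = d_j` for `j ∈ J ∩ Iᶜ`. -/
noncomputable def countNum (b : ℕ) {n s : ℕ} (P : Fin n → Fin s → ℝ) (i : Fin n)
    (k d : Fin s → ℕ) (c : ℕ) (J I : Finset (Fin s)) : ℕ :=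
  (Finset.univ.filter fun l : Fin n => l ≠ i ∧
    (∀ j ∈ I, ((k j + d j + c : ℕ) : ℕ∞) ≤ gammaB b (P i j) (P l j)) ∧
    (∀ j ∉ J, ((k j : ℕ) : ℕ∞) ≤ gammaB b (P i j) (P l j)) ∧
    (∀ j ∈ J \ I, gammaB b (P i j) (P l j) = ((d j : ℕ) : ℕ∞))).card

/-- The weighted sum of counting numbers
`m̃_b(k,d,J;P) = 2^{−|J|} Σ_{I ⊆ J} b^{|k|_{I*}+|d|_J+|J|+|I|} (b−1)^{|I|−|J|}
  m_b(k,d,2,J,I;P)/(n−1)`, with `I* = I ∪ Jᶜ`, relative to `u_i`. -/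
noncomputable def mTilde (b : ℕ) {n s : ℕ} (P : Fin n → Fin s → ℝ) (i : Fin n)
    (k d : Fin s → ℕ) (J : Finset (Fin s)) : ℝ :=
  (2 : ℝ) ^ (-(J.card : ℤ)) * ∑ I ∈ J.powerset,
    (b : ℝ) ^ ((∑ j ∈ I ∪ Jᶜ, k j) + (∑ j ∈ J, d j) + J.card + I.card) *
    ((b : ℝ) - 1) ^ ((I.card : ℤ) - (J.card : ℤ)) *
    ((countNum b P i k d 2 J I : ℝ) / ((n : ℝ) - 1))

/-!
Let `t ∈ ℕ^s` with `|t| ≤ m`. Refining `t` in one coordinate to a resolution vector of total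
size `m`, the net property shows that exactly `b^{m-|t|}` points of `P` share their first `t_j`
digits in every coordinate `j` with `u_i`. As `γ_b(x,y) ≥ t` means that `x` and `y` share `t`
digits, splitting `γ ≥ t_j` into `γ = t_j` or `γ ≥ t_j + 1` one coordinate at a time shows that
exactly `b^{m-|t|-|E|}(b-1)^{|E|}` points have `γ ≥ t_j` off `E` and `γ = t_j` on `E`. Hence
`m_b(k,d,2,J,I;P) = b^{m-e_I}(b-1)^{|J|-|I|} - [I = J]`, where `b^{e_I}` is the weight of the term
for `I` in `m̃_b`, so every term equals `b^m/(b^m-1)` except the one for `I = J`, which is smaller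
by `b^{|k|+|d|_J+2|J|}/(b^m-1)`. This gives equality in the first inequality, and the second
reduces to `2^{|J|} ≤ b^{|k|+|d|_J+2|J|}`.
-/

lemma floor_pow_mul_eq_div {b : ℕ} (hb : 0 < b) (x : ℝ) (t r : ℕ) :
    ⌊(b : ℝ) ^ t * x⌋₊ = ⌊(b : ℝ) ^ (t + r) * x⌋₊ / b ^ r := by
  rw [← Nat.floor_div_natCast, Nat.cast_pow, pow_add]
  field_simp

lemma floor_pow_mul_lt {b : ℕ} (hb : 0 < b) {x : ℝ} (hx : x ∈ Set.Ico (0 : ℝ) 1) (t : ℕ) :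
    ⌊(b : ℝ) ^ t * x⌋₊ < b ^ t := by
  rw [Nat.floor_lt (by have := hx.1; positivity)]
  push_cast
  nlinarith [hx.2, pow_pos (show (0 : ℝ) < b by exact_mod_cast hb) t]

lemma mem_Ico_zpow_iff_floor {b : ℕ} (hb : 0 < b) {x : ℝ} (hx : 0 ≤ x) (t a : ℕ) :
    x ∈ Set.Ico ((a : ℝ) * (b : ℝ) ^ (-(t : ℤ))) (((a : ℝ) + 1) * (b : ℝ) ^ (-(t : ℤ))) ↔
      ⌊(b : ℝ) ^ t * x⌋₊ = a := by
  have hbt : (0 : ℝ) < (b : ℝ) ^ t := by positivity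
  rw [zpow_neg, zpow_natCast, ← div_eq_mul_inv, ← div_eq_mul_inv, Set.mem_Ico,
    div_le_iff₀ hbt, lt_div_iff₀ hbt, Nat.floor_eq_iff (by positivity), mul_comm x]

lemma card_filter_range_div_eq {q N c : ℕ} (hq : 0 < q) (hc : c < N) :
    #{a ∈ range (N * q) | a / q = c} = q := by
  have hIco : {a ∈ range (N * q) | a / q = c} = Ico (c * q) (c * q + q) := by
    ext a
    simp only [mem_filter, mem_range, mem_Ico, Nat.div_eq_iff hq]
    have : c * q + q ≤ N * q := by nlinarith
    omega
  rw [hIco, Nat.card_Ico]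
  omega

lemma le_sInf_setOf_and_not_succ_iff {A : ℕ → Prop} (hA : Antitone A) (h0 : A 0)
    (hex : ∃ i, ¬ A i) (t : ℕ) : t ≤ sInf {i | A i ∧ ¬ A (i + 1)} ↔ A t := by
  classical
  have hpos : 0 < Nat.find hex := Nat.pos_of_ne_zero fun h => Nat.find_spec hex (h ▸ h0)
  have hfind : Nat.find hex - 1 ∈ {i | A i ∧ ¬ A (i + 1)} := by
    refine ⟨not_not.1 (Nat.find_min hex (by omega)), ?_⟩
    rw [Nat.sub_add_cancel hpos]
    exact Nat.find_spec hex
  rw [le_csInf_iff (OrderBot.bddBelow _) ⟨_, hfind⟩]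
  constructor
  · intro h
    by_contra hAt
    have h1 := h _ hfind
    have h2 := Nat.find_min' hex hAt
    omega
  · rintro hAt i ⟨-, hi⟩
    by_contra! hlt
    exact hi (hA hlt hAt)

lemma natCast_le_gammaB_iff {b : ℕ} (hb : 2 ≤ b) {x y : ℝ} (hx : x ∈ Set.Ico (0 : ℝ) 1)
    (hy : y ∈ Set.Ico (0 : ℝ) 1) (t : ℕ) :
    (t : ℕ∞) ≤ gammaB b x y ↔ ⌊(b : ℝ) ^ t * x⌋₊ = ⌊(b : ℝ) ^ t * y⌋₊ := by
  by_cases hxy : x = y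
  · simp [gammaB, hxy]
  have hfloor : ∀ i : ℕ, ⌊(b : ℝ) ^ i * x⌋ = ⌊(b : ℝ) ^ i * y⌋ ↔
      ⌊(b : ℝ) ^ i * x⌋₊ = ⌊(b : ℝ) ^ i * y⌋₊ := fun i => by
    rw [← Int.natCast_floor_eq_floor (by have := hx.1; positivity),
      ← Int.natCast_floor_eq_floor (by have := hy.1; positivity), Nat.cast_inj]
  simp only [gammaB, if_neg hxy, ne_eq, hfloor, Nat.cast_le]
  refine le_sInf_setOf_and_not_succ_iff ?_ ?_ ?_ t
  · refine antitone_nat_of_succ_le fun i h => ?_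
    rw [floor_pow_mul_eq_div (by omega) x i 1, floor_pow_mul_eq_div (by omega) y i 1, h]
  · simp [Nat.floor_eq_zero.2 hx.2, Nat.floor_eq_zero.2 hy.2]
  · obtain ⟨i, hi⟩ := pow_unbounded_of_one_lt (|x - y|⁻¹) (by exact_mod_cast hb : (1 : ℝ) < b)
    refine ⟨i, fun h => ?_⟩
    have hclose := Int.abs_sub_lt_one_of_floor_eq_floor ((hfloor i).2 h)
    rw [← mul_sub, abs_mul, abs_of_pos (by positivity)] at hclose
    rw [inv_lt_iff_one_lt_mul₀ (abs_pos.2 (sub_ne_zero.2 hxy))] at hi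
    linarith

lemma gammaB_self (b : ℕ) (x : ℝ) : gammaB b x x = ⊤ := if_pos rfl

lemma ENat.natCast_le_iff_eq_or_succ_le (g : ℕ∞) (n : ℕ) :
    (n : ℕ∞) ≤ g ↔ g = n ∨ ((n + 1 : ℕ) : ℕ∞) ≤ g := by
  rw [le_iff_eq_or_lt, Nat.cast_succ, ENat.add_one_le_iff (ENat.natCast_ne_top n), eq_comm]

def AtLevel {ι : Type*} (g : ι → ℕ∞) (t : ι → ℕ) (E : Finset ι) : Prop :=
  (∀ j ∉ E, (t j : ℕ∞) ≤ g j) ∧ ∀ j ∈ E, g j = t j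

section AtLevel

variable {ι : Type*} [DecidableEq ι] {g : ι → ℕ∞} {t : ι → ℕ} {E : Finset ι} {j₀ : ι}

lemma atLevel_iff_insert_or (hj₀ : j₀ ∉ E) :
    AtLevel g t E ↔ AtLevel g t (insert j₀ E) ∨ AtLevel g (t + Pi.single j₀ 1) E := by
  have hne : ∀ j, j ≠ j₀ → (t + Pi.single j₀ 1 : ι → ℕ) j = t j := fun j hj => by
    simp [Pi.single_eq_of_ne hj]
  have hj₀' : (t + Pi.single j₀ 1 : ι → ℕ) j₀ = t j₀ + 1 := by simp
  simp only [AtLevel, mem_insert]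
  constructor
  · rintro ⟨hle, heq⟩
    rcases (ENat.natCast_le_iff_eq_or_succ_le _ _).1 (hle j₀ hj₀) with h | h
    · refine .inl ⟨fun j hj => hle j (not_or.1 hj).2, fun j hj => ?_⟩
      rcases hj with rfl | hj
      exacts [h, heq j hj]
    · refine .inr ⟨fun j hj => ?_, fun j hj => ?_⟩
      · by_cases hj' : j = j₀
        · rwa [hj', hj₀']
        · exact (hne j hj').symm ▸ hle j hj
      · exact (hne j (ne_of_mem_of_not_mem hj hj₀)).symm ▸ heq j hj
  · rintro (⟨hle, heq⟩ | ⟨hle, heq⟩)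
    · refine ⟨fun j hj => ?_, fun j hj => heq j (.inr hj)⟩
      by_cases hj' : j = j₀
      · exact (heq j (.inl hj')).ge
      · exact hle j (not_or.2 ⟨hj', hj⟩)
    · refine ⟨fun j hj => ?_, fun j hj => ?_⟩
      · by_cases hj' : j = j₀
        · subst hj'
          exact le_trans (by simp) (hj₀' ▸ hle j hj)
        · exact hne j hj' ▸ hle j hj
      · exact hne j (ne_of_mem_of_not_mem hj hj₀) ▸ heq j hj

lemma not_atLevel_insert_and (hj₀ : j₀ ∉ E) :
    ¬ (AtLevel g t (insert j₀ E) ∧ AtLevel g (t + Pi.single j₀ 1) E) := by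
  rintro ⟨h₁, h₂⟩
  have := h₁.2 j₀ (mem_insert_self j₀ E) ▸ h₂.1 j₀ hj₀
  norm_cast at this
  simp at this

end AtLevel

noncomputable def levelSet {α ι : Type*} [Fintype α] (G : α → ι → ℕ∞) (t : ι → ℕ)
    (E : Finset ι) : Finset α :=
  univ.filter fun l => AtLevel (G l) t E

lemma card_levelSet_eq_add {α ι : Type*} [Fintype α] [DecidableEq ι] (G : α → ι → ℕ∞)
    (t : ι → ℕ) {E : Finset ι} {j₀ : ι} (hj₀ : j₀ ∉ E) :
    #(levelSet G t E) = #(levelSet G t (insert j₀ E)) + #(levelSet G (t + Pi.single j₀ 1) E) := by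
  rw [levelSet, levelSet, levelSet, ← card_union_of_disjoint
    (disjoint_filter.2 fun l _ h₁ h₂ => not_atLevel_insert_and hj₀ ⟨h₁, h₂⟩), ← filter_or]
  exact congrArg card (filter_congr fun l _ => atLevel_iff_insert_or hj₀)

lemma card_levelSet {α ι : Type*} [Fintype α] [Fintype ι] [DecidableEq ι] (G : α → ι → ℕ∞)
    (b M : ℕ) (h₀ : ∀ t : ι → ℕ, ∑ j, t j ≤ M → #(levelSet G t ∅) = b ^ (M - ∑ j, t j))
    (E : Finset ι) (t : ι → ℕ) (h : ∑ j, t j + #E ≤ M) :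
    (#(levelSet G t E) : ℤ) = (b : ℤ) ^ (M - ∑ j, t j - #E) * ((b : ℤ) - 1) ^ #E := by
  induction E using Finset.induction_on generalizing t with
  | empty => simp [h₀ t (by simpa using h)]
  | insert j₀ E hj₀ ih =>
    rw [card_insert_of_notMem hj₀] at h ⊢
    have hsum : ∑ j, (t + Pi.single j₀ 1 : ι → ℕ) j = ∑ j, t j + 1 := by
      simp [sum_add_distrib]
    have key : (#(levelSet G t E) : ℤ) = #(levelSet G t (insert j₀ E)) +
        #(levelSet G (t + Pi.single j₀ 1) E) := mod_cast card_levelSet_eq_add G t hj₀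
    rw [ih t (by omega), ih _ (by omega), hsum] at key
    rw [show M - ∑ j, t j - #E = M - ∑ j, t j - (#E + 1) + 1 by omega,
      show M - (∑ j, t j + 1) - #E = M - ∑ j, t j - (#E + 1) by omega] at key
    linear_combination -key

-- For `I ⊆ J`, the thresholds of `countNum`: `k j + d j + c` on `I`, `d j` on `J \ I`, `k j` off `J`.
def countLevels {s : ℕ} (k d : Fin s → ℕ) (c : ℕ) (J I : Finset (Fin s)) (j : Fin s) : ℕ :=
  (if j ∈ I ∪ Jᶜ then k j else 0) + (if j ∈ J then d j else 0) + if j ∈ I then c else 0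

section countLevels

variable {s : ℕ} (k d : Fin s → ℕ) (c : ℕ) {J I : Finset (Fin s)} {j : Fin s}

lemma sum_countLevels :
    ∑ j, countLevels k d c J I j = ∑ j ∈ I ∪ Jᶜ, k j + ∑ j ∈ J, d j + c * #I := by
  simp only [countLevels, sum_add_distrib, sum_ite_mem, univ_inter, sum_const, smul_eq_mul,
    mul_comm]

lemma countLevels_of_mem (hIJ : I ⊆ J) (hj : j ∈ I) : countLevels k d c J I j = k j + d j + c := by
  simp [countLevels, hj, hIJ hj]

lemma countLevels_of_mem_sdiff (hj : j ∈ J \ I) : countLevels k d c J I j = d j := by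
  simp_all [countLevels]

lemma countLevels_of_notMem (hIJ : I ⊆ J) (hj : j ∉ J) : countLevels k d c J I j = k j := by
  have hjI : j ∉ I := fun h => hj (hIJ h)
  simp [countLevels, hj, hjI]

end countLevels

section countNum

variable (b : ℕ) {n s : ℕ} (P : Fin n → Fin s → ℝ) (i : Fin n) (k d : Fin s → ℕ) (c : ℕ)
  {J I : Finset (Fin s)}

lemma countNum_eq_card_erase (hIJ : I ⊆ J) :
    countNum b P i k d c J I =
      #((levelSet (fun l j => gammaB b (P i j) (P l j)) (countLevels k d c J I) (J \ I)).erase i) := by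
  rw [countNum, ← filter_ne']
  congr 1
  ext l
  simp only [levelSet, mem_filter, mem_univ, true_and]
  constructor
  · rintro ⟨hne, hI, hJ, hJI⟩
    refine ⟨⟨fun j hj => ?_, fun j hj => ?_⟩, hne⟩
    · by_cases hjI : j ∈ I
      · exact countLevels_of_mem k d c hIJ hjI ▸ hI j hjI
      · have hjJ : j ∉ J := fun h => hj (mem_sdiff.2 ⟨h, hjI⟩)
        exact countLevels_of_notMem k d c hIJ hjJ ▸ hJ j hjJ
    · exact countLevels_of_mem_sdiff k d c hj ▸ hJI j hj
  · rintro ⟨⟨hle, heq⟩, hne⟩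
    refine ⟨hne, fun j hj => ?_, fun j hj => ?_, fun j hj => ?_⟩
    · exact countLevels_of_mem k d c hIJ hj ▸ hle j fun h => (mem_sdiff.1 h).2 hj
    · exact countLevels_of_notMem k d c hIJ hj ▸ hle j fun h => hj (mem_sdiff.1 h).1
    · exact countLevels_of_mem_sdiff k d c hj ▸ heq j hj

lemma mem_levelSet_countLevels_iff (hIJ : I ⊆ J) :
    i ∈ levelSet (fun l j => gammaB b (P i j) (P l j)) (countLevels k d c J I) (J \ I) ↔ I = J := by
  simp only [levelSet, mem_filter, AtLevel, gammaB_self, mem_univ, true_and, le_top,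
    implies_true, ENat.top_ne_natCast, imp_false, mem_sdiff, not_and, not_not]
  exact ⟨hIJ.antisymm, by rintro rfl; exact fun _ => id⟩

end countNum

namespace IsNet

variable {b m s : ℕ} {P : Fin (b ^ m) → Fin s → ℝ}

lemma card_filter_digits (hb : 0 < b) (hP : IsNet b m s P) (k : Fin s → ℕ)
    (hk : ∑ j, k j = m) (Q : (Fin s → ℕ) → Prop) :
    #{l | Q fun j => ⌊(b : ℝ) ^ k j * P l j⌋₊} =
      #{a ∈ Fintype.piFinset fun j => range (b ^ k j) | Q a} := by
  set D : Fin (b ^ m) → Fin s → ℕ := fun l j => ⌊(b : ℝ) ^ k j * P l j⌋₊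
  have hD_lt : ∀ l j, D l j < b ^ k j := fun l j => floor_pow_mul_lt hb (hP.1 l j) (k j)
  have hD_unique : ∀ a : Fin s → ℕ, (∀ j, a j < b ^ k j) → ∃! l, D l = a := fun a ha => by
    simpa only [funext_iff, mem_Ico_zpow_iff_floor hb (hP.1 _ _).1] using hP.2 k a hk ha
  refine card_bij (fun l _ => D l) (fun l hl => ?_) (fun l₁ _ l₂ _ h => ?_) (fun a ha => ?_)
  · simp only [mem_filter, mem_univ, true_and, Fintype.mem_piFinset, mem_range] at hl ⊢
    exact ⟨hD_lt l, hl⟩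
  · exact (hD_unique _ (hD_lt l₁)).unique rfl h.symm
  · simp only [mem_filter, Fintype.mem_piFinset, mem_range] at ha
    obtain ⟨l, hl, -⟩ := hD_unique a ha.1
    exact ⟨l, by simpa [D, ← hl] using ha.2, hl⟩

lemma card_filter_floor_eq (hb : 0 < b) (hP : IsNet b m s P) (t : Fin s → ℕ)
    (ht : ∑ j, t j ≤ m) (c : Fin s → ℕ) (hc : ∀ j, c j < b ^ t j) :
    #{l | ∀ j, ⌊(b : ℝ) ^ t j * P l j⌋₊ = c j} = b ^ (m - ∑ j, t j) := by
  obtain rfl | hs := s.eq_zero_or_pos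
  · simp
  set r : Fin s → ℕ := Pi.single ⟨0, hs⟩ (m - ∑ j, t j)
  have hr : ∑ j, r j = m - ∑ j, t j := by simp [r]
  have hfloor : ∀ l j, ⌊(b : ℝ) ^ t j * P l j⌋₊ = ⌊(b : ℝ) ^ (t j + r j) * P l j⌋₊ / b ^ r j :=
    fun l j => floor_pow_mul_eq_div hb _ _ _
  simp_rw [hfloor]
  calc #{l | ∀ j, ⌊(b : ℝ) ^ (t j + r j) * P l j⌋₊ / b ^ r j = c j}
      = #{a ∈ Fintype.piFinset (fun j => range (b ^ (t j + r j))) | ∀ j, a j / b ^ r j = c j} := by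
        convert hP.card_filter_digits hb (fun j => t j + r j)
          (by rw [sum_add_distrib, hr]; omega) fun a => ∀ j, a j / b ^ r j = c j using 3
    _ = #(Fintype.piFinset fun j => {x ∈ range (b ^ t j * b ^ r j) | x / b ^ r j = c j}) := by
        congr 1
        ext a
        simp [Fintype.mem_piFinset, forall_and, pow_add]
    _ = b ^ (m - ∑ j, t j) := by
        rw [Fintype.card_piFinset, ← hr, ← prod_pow_eq_pow_sum]
        exact prod_congr rfl fun j _ => card_filter_range_div_eq (by positivity) (hc j)

lemma card_levelSet_gammaB_empty (hb : 2 ≤ b) (hP : IsNet b m s P) (i : Fin (b ^ m))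
    (t : Fin s → ℕ) (ht : ∑ j, t j ≤ m) :
    #(levelSet (fun l j => gammaB b (P i j) (P l j)) t ∅) = b ^ (m - ∑ j, t j) := by
  have hb₀ : 0 < b := by omega
  rw [← hP.card_filter_floor_eq hb₀ t ht (fun j => ⌊(b : ℝ) ^ t j * P i j⌋₊)
    fun j => floor_pow_mul_lt hb₀ (hP.1 i j) _]
  congr 1
  ext l
  simp [levelSet, AtLevel, natCast_le_gammaB_iff hb (hP.1 i _) (hP.1 l _), eq_comm]

theorem countNum_eq (hb : 2 ≤ b) (hP : IsNet b m s P) (i : Fin (b ^ m)) (k d : Fin s → ℕ)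
    (c : ℕ) {J I : Finset (Fin s)} (hIJ : I ⊆ J)
    (h : ∑ j ∈ I ∪ Jᶜ, k j + ∑ j ∈ J, d j + c * #I + #(J \ I) ≤ m) :
    (countNum b P i k d c J I : ℤ) =
      (b : ℤ) ^ (m - (∑ j ∈ I ∪ Jᶜ, k j + ∑ j ∈ J, d j + c * #I + #(J \ I))) *
        ((b : ℤ) - 1) ^ #(J \ I) - if I = J then 1 else 0 := by
  have hmem := mem_levelSet_countLevels_iff b P i k d c hIJ
  have hcard := card_levelSet _ b m (hP.card_levelSet_gammaB_empty hb i) (J \ I)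
    (countLevels k d c J I) (by rw [sum_countLevels]; omega)
  rw [sum_countLevels, Nat.sub_sub] at hcard
  rw [countNum_eq_card_erase b P i k d c hIJ, ← hcard]
  split_ifs with hIJ'
  · rw [← card_erase_add_one (hmem.2 hIJ')]
    push_cast
    ring
  · rw [erase_eq_of_notMem (mt hmem.1 hIJ'), sub_zero]

lemma mTilde_summand_eq (hb : 2 ≤ b) (hP : IsNet b m s P) (i : Fin (b ^ m)) (k d : Fin s → ℕ)
    {J I : Finset (Fin s)} (hIJ : I ⊆ J) (hmkd : ∑ j, k j + ∑ j ∈ J, d j + 2 * #J ≤ m) :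
    (b : ℝ) ^ (∑ j ∈ I ∪ Jᶜ, k j + ∑ j ∈ J, d j + #J + #I) * ((b : ℝ) - 1) ^ ((#I : ℤ) - #J) *
        ((countNum b P i k d 2 J I : ℝ) / (((b ^ m : ℕ) : ℝ) - 1)) =
      ((b : ℝ) ^ m - if I = J then (b : ℝ) ^ (∑ j, k j + ∑ j ∈ J, d j + 2 * #J) else 0) /
        ((b : ℝ) ^ m - 1) := by
  set e := ∑ j ∈ I ∪ Jᶜ, k j + ∑ j ∈ J, d j + #J + #I
  have hIJcard := card_le_card hIJ
  have hsdiff := card_sdiff_of_subset hIJ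
  have he : e ≤ m := by
    have : ∑ j ∈ I ∪ Jᶜ, k j ≤ ∑ j, k j := sum_le_sum_of_subset (subset_univ _)
    omega
  have hcount : (countNum b P i k d 2 J I : ℝ) =
      (b : ℝ) ^ (m - e) * ((b : ℝ) - 1) ^ #(J \ I) - if I = J then 1 else 0 := by
    have := hP.countNum_eq hb i k d 2 hIJ (by omega)
    rw [show m - (∑ j ∈ I ∪ Jᶜ, k j + ∑ j ∈ J, d j + 2 * #I + #(J \ I)) = m - e by omega] at this
    exact_mod_cast this
  have hzpow : ((b : ℝ) - 1) ^ ((#I : ℤ) - #J) = (((b : ℝ) - 1) ^ #(J \ I))⁻¹ := by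
    rw [← zpow_natCast, ← zpow_neg, hsdiff]
    congr 1
    omega
  have hb₁ : ((b : ℝ) - 1) ^ #(J \ I) ≠ 0 := by
    have : (2 : ℝ) ≤ b := by exact_mod_cast hb
    exact pow_ne_zero _ (by linarith)
  rw [hcount, hzpow, Nat.cast_pow, mul_div_assoc', mul_sub, ← pow_mul_pow_sub (b : ℝ) he]
  congr 2
  · field_simp
  · split_ifs with hIJ'
    · subst hIJ'
      have : e = ∑ j, k j + ∑ j ∈ I, d j + 2 * #I := by
        simp only [e, union_compl, two_mul]
        ring
      simp [this]
    · exact mul_zero _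

theorem mTilde_eq (hb : 2 ≤ b) (hP : IsNet b m s P) (i : Fin (b ^ m)) (k d : Fin s → ℕ)
    (J : Finset (Fin s)) (hmkd : ∑ j, k j + ∑ j ∈ J, d j + 2 * #J ≤ m) :
    mTilde b P i k d J = (2 ^ #J * (b : ℝ) ^ m - (b : ℝ) ^ (∑ j, k j + ∑ j ∈ J, d j + 2 * #J)) /
      (2 ^ #J * ((b : ℝ) ^ m - 1)) := by
  rw [mTilde, sum_congr rfl fun I hI => hP.mTilde_summand_eq hb i k d (mem_powerset.1 hI) hmkd,
    ← sum_div, sum_sub_distrib, sum_const, card_powerset, sum_ite_eq',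
    if_pos (mem_powerset_self J), zpow_neg, zpow_natCast, nsmul_eq_mul]
  push_cast
  rw [mul_comm (2 ^ #J : ℝ) (_ - 1), ← div_div]
  ring

end IsNet

theorem claim_mTilde_easy_case_general (b m s : ℕ)
    (P : Fin (b ^ m) → Fin s → ℝ) (hP : IsNet b m s P)
    (J : Finset (Fin s)) (k d : Fin s → ℕ)
    (hmkd : (∑ j, k j) + (∑ j ∈ J, d j) + 2 * J.card ≤ m) :
    ∀ i : Fin (b ^ m),
      mTilde b P i k d J ≤
        ((b : ℝ) ^ m / ((b : ℝ) ^ m - 1)) *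
          (((2 : ℝ) ^ J.card -
            (b : ℝ) ^ (((∑ j, (k j : ℤ)) + (∑ j ∈ J, (d j : ℤ)) + 2 * (J.card : ℤ)) - (m : ℤ))) /
            (2 : ℝ) ^ J.card) ∧
      ((b : ℝ) ^ m / ((b : ℝ) ^ m - 1)) *
          (((2 : ℝ) ^ J.card -
            (b : ℝ) ^ (((∑ j, (k j : ℤ)) + (∑ j ∈ J, (d j : ℤ)) + 2 * (J.card : ℤ)) - (m : ℤ))) /
            (2 : ℝ) ^ J.card) ≤ 1 := by
  intro i
  obtain hb | hb := lt_or_ge b 2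
  -- Then `b ^ m = 1`, so both sides have a factor `x / (b ^ m - 1) = x / 0 = 0`.
  · have hX : (b : ℝ) ^ m = 1 := by
      have : b ^ m ≤ 1 := pow_le_one₀ (Nat.zero_le b) (by omega)
      have : 0 < b ^ m := i.pos
      exact_mod_cast (by omega : b ^ m = 1)
    simp [mTilde, hX]
  set K := ∑ j, k j + ∑ j ∈ J, d j + 2 * #J
  have hX₀ : (b : ℝ) ^ m ≠ 0 := by positivity
  have hzpow : (b : ℝ) ^ ((∑ j, (k j : ℤ)) + (∑ j ∈ J, (d j : ℤ)) + 2 * (#J : ℤ) - m) =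
      (b : ℝ) ^ K / (b : ℝ) ^ m := by
    rw [zpow_sub₀ (by positivity), ← zpow_natCast, ← zpow_natCast]
    push_cast [K]
    rfl
  have hrhs : (b : ℝ) ^ m / ((b : ℝ) ^ m - 1) * ((2 ^ #J - (b : ℝ) ^ K / (b : ℝ) ^ m) / 2 ^ #J) =
      (2 ^ #J * (b : ℝ) ^ m - (b : ℝ) ^ K) / (2 ^ #J * ((b : ℝ) ^ m - 1)) := by
    rw [div_mul_div_comm, mul_sub, mul_div_cancel₀ _ hX₀, mul_comm ((b : ℝ) ^ m),
      mul_comm ((b : ℝ) ^ m - 1)]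
  rw [hzpow, hrhs, hP.mTilde_eq hb i k d J hmkd]
  refine ⟨le_rfl, div_le_one_of_le₀ ?_ ?_⟩
  · have h2K : (2 : ℝ) ^ #J ≤ (b : ℝ) ^ K :=
      (pow_le_pow_right₀ one_le_two (by omega)).trans
        (pow_le_pow_left₀ zero_le_two (by exact_mod_cast hb) K)
    linarith
  · have : (1 : ℝ) ≤ (b : ℝ) ^ m := one_le_pow₀ (by exact_mod_cast (by omega : 1 ≤ b))
    have : (0 : ℝ) ≤ 2 ^ #J := by positivity
    nlinarith

/-- For a `(0,m,s)`-net `P` in base `b ≥ s ≥ 1` with `m ≥ 1`, a nonempty `J ⊆ {1,…,s}`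
and `k, d ∈ ℕ^s` with `m ≥ |k| + |d|_J + 2|J|`, the weighted sum relative to any point
satisfies `m̃_b(k,d,J;P) ≤ (b^m/(b^m−1))·(2^{|J|} − b^{|k|+|d|_J+2|J|−m})/2^{|J|} ≤ 1`. -/
theorem claim_mTilde_easy_case (b m s : ℕ) (hs : 1 ≤ s) (hbs : s ≤ b) (hm : 1 ≤ m)
    (P : Fin (b ^ m) → Fin s → ℝ) (hP : IsNet b m s P)
    (J : Finset (Fin s)) (hJ : J.Nonempty) (k d : Fin s → ℕ)
    (hmkd : (∑ j, k j) + (∑ j ∈ J, d j) + 2 * J.card ≤ m) :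
    ∀ i : Fin (b ^ m),
      mTilde b P i k d J ≤
        ((b : ℝ) ^ m / ((b : ℝ) ^ m - 1)) *
          (((2 : ℝ) ^ J.card -
            (b : ℝ) ^ (((∑ j, (k j : ℤ)) + (∑ j ∈ J, (d j : ℤ)) + 2 * (J.card : ℤ)) - (m : ℤ))) /
            (2 : ℝ) ^ J.card) ∧
      ((b : ℝ) ^ m / ((b : ℝ) ^ m - 1)) *
          (((2 : ℝ) ^ J.card -
            (b : ℝ) ^ (((∑ j, (k j : ℤ)) + (∑ j ∈ J, (d j : ℤ)) + 2 * (J.card : ℤ)) - (m : ℤ))) /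
            (2 : ℝ) ^ J.card) ≤ 1 :=
  claim_mTilde_easy_case_general b m s P hP J k d hmkd
end

section
/- Let b, s be integers with b ≥ s ≥ 1, let J ⊆ {1,…,s} be nonempty, and let m ∈ ℕ and k ∈ ℕ^s satisfy |J| ≤ m < |k| + 2|J|, where |k| := Σ_{j=1}^s k_j. Then G(m,s,J,k,0) ≤ 2^{|J|} − 1, where 0 denotes the zero vector in ℕ^s. -/
open Finset
open scoped Classical

/-- `h_{j,i}(ℓ) = (b^{j+i−ℓ}/(b−1)^{j−i})·C(j−i−1, ℓ−2i)`, for integers `0 ≤ i < j`, `ℓ ∈ ℤ`. -/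
noncomputable def hFun (b j i : ℕ) (l : ℤ) : ℝ :=
  ((b : ℝ) ^ ((j : ℤ) + (i : ℤ) - l) / ((b : ℝ) - 1) ^ (j - i)) *
    (Nat.choose (j - i - 1) (l - 2 * (i : ℤ)).toNat : ℝ)

/-- `g_{j,i}(ℓ)`: `0` if `ℓ ≤ 2i`; `(b/(b−1))^{j−i−1}` if `ℓ = 2i+1`;
`1 + h_{j,i}(ℓ)` if `2i+1 < ℓ < j+i` and `ℓ` is odd; `1` otherwise
(i.e. if `ℓ ≥ i+j`, or `ℓ > 2i` and `ℓ` is even). -/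
noncomputable def gFun (b j i : ℕ) (l : ℤ) : ℝ :=
  if l ≤ 2 * (i : ℤ) then 0
  else if l = 2 * (i : ℤ) + 1 then ((b : ℝ) / ((b : ℝ) - 1)) ^ (j - i - 1)
  else if Odd l ∧ l < (j : ℤ) + (i : ℤ) then 1 + hFun b j i l
  else 1

/-- `G(m,s,J,k,d) := Σ_{I ⊊ J} g_{|J|,|I|}(m − |k|_{I*} − |d|_J)`, where `I* = I ∪ Jᶜ`. -/
noncomputable def GFun (b s : ℕ) (J : Finset (Fin s)) (m : ℕ) (k d : Fin s → ℕ) : ℝ :=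
  ∑ I ∈ J.powerset.filter (· ≠ J),
    gFun b J.card I.card
      ((m : ℤ) - ∑ j ∈ I ∪ Jᶜ, (k j : ℤ) - ∑ j ∈ J, (d j : ℤ))

/-!
Discharging. Put `L I = m - |k|_{I ∪ Jᶜ}`, which is antitone in `I`, and
`g I = g_{|J|,|I|}(L I)` for `I ⊊ J`. If `g I > 1` then `L I = 2v - 1` with `|I| < v < |J|`,
and `I` hands its excess `g I - 1` in equal parts to the `binom(|J| - |I|, v - |I|)` sets
`I ⊆ I' ⊊ J` of size `v`. A receiver `I'` has `L I' ≤ L I = 2|I'| - 1`, so `g I' = 0`, and it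
receives at most `1`: with `x = 1/(b-1)`, `u = |I'|` and `r = |J| - u`, its load is
`∑_c binom(u,c) (g_{|J|,u-c}(2u-1) - 1) / binom(r+c,c)`, and `(u + r - 1) x ≤ 1` (that is,
`|J| ≤ b`) keeps this below `1` through `(1 - t) eᵗ ≤ 1`. After the transfer every strict subset
of `J` carries at most `1`.
-/

open Real
open scoped Nat

theorem sum_le_card_of_transfer {ι : Type*} (P : Finset ι) (g : ι → ℝ) (w : ι → ι → ℝ)
    (h : ∀ a ∈ P, g a + ∑ a' ∈ P, w a' a ≤ 1 + ∑ a' ∈ P, w a a') :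
    ∑ a ∈ P, g a ≤ P.card := by
  have hsum := sum_le_sum h
  rw [sum_add_distrib, sum_add_distrib, sum_comm (s := P) (f := fun a a' => w a' a)] at hsum
  simpa using hsum

theorem one_sub_mul_exp_le_one (t : ℝ) : (1 - t) * exp t ≤ 1 := by
  calc (1 - t) * exp t ≤ exp (-t) * exp t := by gcongr; exact one_sub_le_exp_neg t
    _ = 1 := by rw [← exp_add, neg_add_cancel, exp_zero]

theorem one_add_pow_le_exp_mul {x : ℝ} (hx : 0 ≤ x) (k : ℕ) : (1 + x) ^ k ≤ exp (k * x) := by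
  calc (1 + x) ^ k ≤ exp x ^ k := by gcongr; linarith [add_one_le_exp x]
    _ = exp (k * x) := (exp_nat_mul x k).symm

theorem one_add_pow_le_one_add_mul_exp {x s : ℝ} (hx : 0 ≤ x) {k : ℕ} (hk : k * x ≤ s) :
    (1 + x) ^ k ≤ 1 + k * x * exp s := by
  have hkx : 0 ≤ k * x := by positivity
  calc (1 + x) ^ k ≤ exp (k * x) := one_add_pow_le_exp_mul hx k
    _ ≤ 1 + k * x * exp (k * x) := by nlinarith [one_sub_mul_exp_le_one (k * x)]
    _ ≤ 1 + k * x * exp s := by gcongr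

theorem sum_range_natCast_mul_two (r : ℕ) : (∑ k ∈ range r, (k : ℝ)) * 2 = r * (r - 1) := by
  induction r with
  | zero => simp
  | succ r ih => rw [sum_range_succ]; push_cast; linarith

theorem one_add_pow_sub_one_le {x : ℝ} (hx : 0 ≤ x) (r : ℕ) :
    (1 + x) ^ r - 1 ≤ r * x * (1 + (r - 1) * x * exp ((r - 1) * x) / 2) := by
  have hterm : ∀ k ∈ range r, (1 + x) ^ k ≤ 1 + k * x * exp ((r - 1) * x) := fun k hk => by
    have : (k : ℝ) ≤ r - 1 := by
      rw [le_sub_iff_add_le]; exact_mod_cast mem_range.1 hk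
    exact one_add_pow_le_one_add_mul_exp hx (by gcongr)
  calc (1 + x) ^ r - 1 = x * ∑ k ∈ range r, (1 + x) ^ k := by
        have h := geom_sum_mul (1 + x) r
        rw [add_sub_cancel_left] at h
        rw [mul_comm, h]
    _ ≤ x * ∑ k ∈ range r, (1 + k * x * exp ((r - 1) * x)) := by
        gcongr with k hk; exact hterm k hk
    _ = r * x * (1 + (r - 1) * x * exp ((r - 1) * x) / 2) := by
        rw [sum_add_distrib, ← sum_mul, ← sum_mul, sum_const, card_range, nsmul_one]
        linear_combination (x ^ 2 * exp ((r - 1) * x) / 2) * sum_range_natCast_mul_two r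

theorem choose_mul_choose_mul_factorial_le (u r c : ℕ) :
    u.choose (c + 1) * (r + c).choose (2 * c + 1) * (2 * c + 1)! ≤
      u ^ (c + 1) * r ^ c * (r + c + 1).choose (c + 1) := by
  have hsplit : (r + c + 1) * ((2 * c + 1)! * (r + c).choose (2 * c + 1)) =
      r.descFactorial (c + 1) * ((c + 1)! * (r + c + 1).choose (c + 1)) := by
    rw [← Nat.descFactorial_eq_factorial_mul_choose, ← Nat.descFactorial_eq_factorial_mul_choose,
      ← Nat.succ_descFactorial_succ, ← Nat.descFactorial_mul_descFactorial (k := c + 1) (by omega),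
      show r + c + 1 - (c + 1) = r by omega, show 2 * c + 1 + 1 - (c + 1) = c + 1 by omega]
  have hu : (c + 1)! * u.choose (c + 1) ≤ u ^ (c + 1) := by
    rw [← Nat.descFactorial_eq_factorial_mul_choose]; exact Nat.descFactorial_le_pow u _
  have hr : r.descFactorial (c + 1) ≤ r ^ c * (r + c + 1) := by
    calc r.descFactorial (c + 1) ≤ r ^ (c + 1) := Nat.descFactorial_le_pow r _
      _ ≤ r ^ c * (r + c + 1) := by rw [pow_succ]; gcongr; omega
  refine Nat.le_of_mul_le_mul_left ?_
    (Nat.mul_pos (Nat.factorial_pos (c + 1)) (by omega : 0 < r + c + 1))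
  calc (c + 1)! * (r + c + 1) * (u.choose (c + 1) * (r + c).choose (2 * c + 1) * (2 * c + 1)!)
      = ((c + 1)! * u.choose (c + 1)) * r.descFactorial (c + 1) *
          ((c + 1)! * (r + c + 1).choose (c + 1)) := by
        rw [mul_assoc _ (r.descFactorial _), ← hsplit]; ring
    _ ≤ u ^ (c + 1) * (r ^ c * (r + c + 1)) * ((c + 1)! * (r + c + 1).choose (c + 1)) := by
        gcongr
    _ = _ := by ring

/-- For `b ≥ 2` and `c ≥ 1`, `gExcess (1 / (b - 1)) (j - i) c = g_{j,i}(2(i + c) - 1) - 1`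
(`gFun_two_mul_sub_one`); the value at `c = 0` is a convention. -/
noncomputable def gExcess (x : ℝ) (r : ℕ) : ℕ → ℝ
  | 0 => 0
  | 1 => (1 + x) ^ (r - 1) - 1
  | c + 2 => (r - 1).choose (2 * c + 3) * x ^ (2 * c + 3) * (1 + x) ^ (r - (2 * c + 3))

theorem gExcess_nonneg {x : ℝ} (hx : 0 ≤ x) (r c : ℕ) : 0 ≤ gExcess x r c := by
  match c with
  | 0 => exact le_rfl
  | 1 => simpa [gExcess] using one_le_pow₀ (by linarith : (1 : ℝ) ≤ 1 + x)
  | c + 2 => unfold gExcess; positivity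

theorem choose_one_mul_gExcess_div_le {x : ℝ} (hx : 0 ≤ x) (u : ℕ) {r : ℕ} (hr : 1 ≤ r) :
    (u.choose 1 : ℝ) * gExcess x (r + 1) 1 / (r + 1).choose 1 ≤
      u * x * (1 + (r - 1) * x * exp ((r - 1) * x) / 2) := by
  have hr1 : (0 : ℝ) ≤ r - 1 := by rw [sub_nonneg]; exact_mod_cast hr
  simp only [gExcess, Nat.choose_one_right, add_tsub_cancel_right, Nat.cast_add, Nat.cast_one]
  rw [div_le_iff₀ (by positivity)]
  calc u * ((1 + x) ^ r - 1) ≤ u * (r * x * (1 + (r - 1) * x * exp ((r - 1) * x) / 2)) := by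
        gcongr; exact one_add_pow_sub_one_le hx r
    _ ≤ u * x * (1 + (r - 1) * x * exp ((r - 1) * x) / 2) * (r + 1) := by
        have : 0 ≤ u * x * (1 + (r - 1) * x * exp ((r - 1) * x) / 2) := by positivity
        nlinarith

theorem choose_add_two_mul_gExcess_div_le_pow {x : ℝ} (hx : 0 ≤ x) (u r d : ℕ) :
    (u.choose (d + 2) : ℝ) * gExcess x (r + (d + 2)) (d + 2) / (r + (d + 2)).choose (d + 2) ≤
      (u * x) ^ (d + 2) * (r * x) ^ (d + 1) * (1 + x) ^ (r - (d + 1)) / (2 * d + 3)! := by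
  simp only [gExcess, show r + (d + 2) - 1 = r + d + 1 by omega,
    show r + (d + 2) - (2 * d + 3) = r - (d + 1) by omega]
  have hC : (u.choose (d + 2) : ℝ) * (r + d + 1).choose (2 * d + 3) * (2 * d + 3)! ≤
      u ^ (d + 2) * r ^ (d + 1) * (r + (d + 2)).choose (d + 2) := by
    have h := choose_mul_choose_mul_factorial_le u r (d + 1)
    rw [show r + (d + 1) = r + d + 1 by ring, show 2 * (d + 1) + 1 = 2 * d + 3 by ring,
      show r + d + 1 + 1 = r + (d + 2) by ring] at h
    exact_mod_cast h
  rw [div_le_div_iff₀ (by exact_mod_cast Nat.choose_pos (by omega))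
    (by exact_mod_cast Nat.factorial_pos _)]
  calc _ = (u.choose (d + 2) : ℝ) * (r + d + 1).choose (2 * d + 3) * (2 * d + 3)! *
        (x ^ (2 * d + 3) * (1 + x) ^ (r - (d + 1))) := by ring
    _ ≤ u ^ (d + 2) * r ^ (d + 1) * (r + (d + 2)).choose (d + 2) *
        (x ^ (2 * d + 3) * (1 + x) ^ (r - (d + 1))) := by gcongr
    _ = _ := by ring

theorem choose_add_two_mul_gExcess_div_le {x : ℝ} (hx : 0 ≤ x) {u r : ℕ} (hr : 1 ≤ r)
    (hux : ((u : ℝ) + r - 1) * x ≤ 1) (d : ℕ) :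
    (u.choose (d + 2) : ℝ) * gExcess x (r + (d + 2)) (d + 2) / (r + (d + 2)).choose (d + 2) ≤
      u * x * ((r - 1) * x) * exp ((r - 1) * x) / 3 * (1 / 16) ^ d := by
  rcases Nat.eq_zero_or_pos u with rfl | hu
  · simp
  obtain rfl | hr2 := hr.eq_or_lt
  · simp only [gExcess]
    rw [Nat.choose_eq_zero_of_lt (by omega : 1 + (d + 2) - 1 < 2 * d + 3)]
    simp
  have hF : (6 : ℝ) * 16 ^ d ≤ (2 * d + 3)! := by
    have h := Nat.factorial_mul_pow_le_factorial (m := 3) (n := 2 * d)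
    rw [pow_mul, show 3 + 2 * d = 2 * d + 3 by ring] at h
    exact_mod_cast h
  have hux1 : (u : ℝ) * x ≤ 1 := by nlinarith [(by exact_mod_cast hr : (1 : ℝ) ≤ r)]
  have hrx1 : (r : ℝ) * x ≤ 1 := by nlinarith [(by exact_mod_cast hu : (1 : ℝ) ≤ u)]
  have hrx2 : (r : ℝ) * x ≤ 2 * ((r - 1) * x) := by
    nlinarith [mul_le_mul_of_nonneg_right (by exact_mod_cast hr2 : (2 : ℝ) ≤ r) hx]
  have hr1 : (0 : ℝ) ≤ r - 1 := by rw [sub_nonneg]; exact_mod_cast hr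
  have hpow : (u * x) ^ (d + 1) * (r * x) ^ (d + 1) ≤ r * x :=
    calc (u * x) ^ (d + 1) * (r * x) ^ (d + 1) ≤ 1 * (r * x) := by
          gcongr
          · exact pow_le_one₀ (by positivity) hux1
          · exact pow_le_of_le_one (by positivity) hrx1 (by omega)
      _ = r * x := one_mul _
  have hexp : (1 + x) ^ (r - (d + 1)) ≤ exp ((r - 1) * x) :=
    calc (1 + x) ^ (r - (d + 1)) ≤ (1 + x) ^ (r - 1) := pow_le_pow_right₀ (by linarith) (by omega)
      _ ≤ exp ((r - 1 : ℕ) * x) := one_add_pow_le_exp_mul hx _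
      _ = exp ((r - 1) * x) := by push_cast [Nat.cast_sub hr]; ring_nf
  calc _ ≤ (u * x) ^ (d + 2) * (r * x) ^ (d + 1) * (1 + x) ^ (r - (d + 1)) / (2 * d + 3)! :=
        choose_add_two_mul_gExcess_div_le_pow hx u r d
    _ = u * x * ((u * x) ^ (d + 1) * (r * x) ^ (d + 1)) * (1 + x) ^ (r - (d + 1)) /
          (2 * d + 3)! := by ring
    _ ≤ u * x * (2 * ((r - 1) * x)) * exp ((r - 1) * x) / (6 * 16 ^ d) := by
        apply div_le_div₀ (by positivity) _ (by positivity) hF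
        exact mul_le_mul (mul_le_mul_of_nonneg_left (hpow.trans hrx2) (by positivity)) hexp
          (by positivity) (by positivity)
    _ = u * x * ((r - 1) * x) * exp ((r - 1) * x) / 3 * (1 / 16) ^ d := by
        rw [one_div_pow]; field_simp; ring

theorem sum_choose_mul_gExcess_div_le_one {x : ℝ} (hx : 0 ≤ x) {u r : ℕ} (hr : 1 ≤ r)
    (hux : ((u : ℝ) + r - 1) * x ≤ 1) :
    ∑ c ∈ range (u + 1), (u.choose c : ℝ) * gExcess x (r + c) c / (r + c).choose c ≤ 1 := by
  set A : ℝ := u * x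
  set s : ℝ := (r - 1) * x
  have hs : 0 ≤ s := mul_nonneg (by rw [sub_nonneg]; exact_mod_cast hr) hx
  have hAs : A + s ≤ 1 := by linarith
  have hK : A * exp s ≤ 1 :=
    calc A * exp s ≤ (1 - s) * exp s := by gcongr; linarith
      _ ≤ 1 := one_sub_mul_exp_le_one s
  cases u with
  | zero => simp [gExcess]
  | succ v =>
    have hhigh : ∑ d ∈ range v, ((v + 1).choose (d + 1 + 1) : ℝ) *
        gExcess x (r + (d + 1 + 1)) (d + 1 + 1) / (r + (d + 1 + 1)).choose (d + 1 + 1) ≤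
          A * exp s * s / 3 * (16 / 15) := by
      have hAE : 0 ≤ A * exp s * s / 3 := by positivity
      calc _ ≤ ∑ d ∈ range v, A * exp s * s / 3 * (1 / 16) ^ d :=
            sum_le_sum fun d _ => (choose_add_two_mul_gExcess_div_le hx hr hux d).trans_eq (by ring)
        _ ≤ A * exp s * s / 3 * (16 / 15) := by
            rw [← mul_sum, range_eq_Ico]
            gcongr
            convert geom_sum_Ico_le_of_lt_one (x := (1 / 16 : ℝ)) (m := 0) (n := v)
              (by norm_num) (by norm_num) using 1
            norm_num
    have hlow := choose_one_mul_gExcess_div_le hx (v + 1) hr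
    have hzero : ((v + 1).choose 0 : ℝ) * gExcess x (r + 0) 0 / (r + 0).choose 0 = 0 := by
      simp [gExcess]
    rw [sum_range_succ', sum_range_succ', hzero, zero_add]
    -- the load is at most `A + (A eˢ) s (1/2 + 16/45) ≤ A + s ≤ 1`
    nlinarith [mul_le_mul_of_nonneg_right hK hs]

theorem sum_powerset_gExcess_div_eq {α : Type*} (x : ℝ) {n : ℕ} {I' : Finset α}
    (hI' : I'.card ≤ n) :
    ∑ I ∈ I'.powerset, gExcess x (n - I.card) (I'.card - I.card) /
        (n - I.card).choose (I'.card - I.card) =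
      ∑ c ∈ range (I'.card + 1), (I'.card.choose c : ℝ) * gExcess x (n - I'.card + c) c /
        (n - I'.card + c).choose c := by
  rw [sum_powerset_apply_card (fun i => gExcess x (n - i) (I'.card - i) /
    (n - i).choose (I'.card - i)), ← sum_range_reflect]
  refine sum_congr rfl fun c hc => ?_
  have hc : c ≤ I'.card := Nat.lt_succ_iff.1 (mem_range.1 hc)
  rw [nsmul_eq_mul, show I'.card + 1 - 1 - c = I'.card - c by omega, Nat.choose_symm hc,
    show n - (I'.card - c) = n - I'.card + c by omega, show I'.card - (I'.card - c) = c by omega,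
    mul_div_assoc]
theorem gFun_eq_zero_of_le {b j i : ℕ} {l : ℤ} (h : l ≤ 2 * i) : gFun b j i l = 0 := by
  rw [gFun, if_pos h]

theorem exists_eq_two_mul_sub_one_of_one_lt_gFun {b j i : ℕ} {l : ℤ} (h : 1 < gFun b j i l) :
    ∃ v : ℕ, l = 2 * v - 1 ∧ i < v ∧ v < j := by
  unfold gFun at h
  split_ifs at h with h1 h2 h3
  · norm_num at h
  · refine ⟨i + 1, by rw [h2]; push_cast; ring, by omega, ?_⟩
    by_contra hj
    rw [show j - i - 1 = 0 by omega, pow_zero] at h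
    exact lt_irrefl _ h
  · obtain ⟨⟨w, hw⟩, hlt⟩ := h3
    refine ⟨(w + 1).toNat, ?_, ?_, ?_⟩ <;> omega
  · exact absurd h (lt_irrefl 1)

theorem gFun_two_mul_sub_one {b j i v : ℕ} (hb : 2 ≤ b) (hiv : i < v) :
    gFun b j i (2 * v - 1) = 1 + gExcess (1 / (b - 1)) (j - i) (v - i) := by
  have hb1 : (b : ℝ) - 1 ≠ 0 := by
    have : (2 : ℝ) ≤ b := by exact_mod_cast hb
    linarith
  have hbx : (b : ℝ) / (b - 1) = 1 + 1 / (b - 1) := by field_simp; ring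
  obtain ⟨c, rfl⟩ : ∃ c, v = i + c + 1 := ⟨v - i - 1, by omega⟩
  rw [show i + c + 1 - i = c + 1 by omega]
  unfold gFun
  rw [if_neg (by push_cast; omega)]
  cases c with
  | zero => rw [if_pos (by push_cast; ring), gExcess, hbx]; ring
  | succ d =>
    rw [if_neg (by push_cast; omega), gExcess]
    by_cases hlt : i + 2 * d + 3 < j
    · rw [if_pos ⟨⟨i + d + 1, by push_cast; ring⟩, by push_cast; omega⟩, hFun]
      set q := j - i - (2 * d + 3)
      have hji : j - i = 2 * d + 3 + q := by omega
      rw [show (j : ℤ) + i - (2 * ((i + (d + 1) + 1 : ℕ) : ℤ) - 1) = q by push_cast; omega,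
        zpow_natCast, show (2 * ((i + (d + 1) + 1 : ℕ) : ℤ) - 1 - 2 * i).toNat = 2 * d + 3 by omega,
        hji, ← hbx, pow_add, div_pow, div_pow, one_pow]
      field_simp
    · rw [if_neg (by push_cast; omega), Nat.choose_eq_zero_of_lt (by omega)]
      simp

section Discharging

variable {α : Type*} [DecidableEq α] (b : ℕ) (J : Finset α) (L : Finset α → ℤ)

noncomputable def excessShare (I I' : Finset α) : ℝ :=
  if I ⊆ I' ∧ L I = 2 * I'.card - 1 ∧ 1 < gFun b J.card I.card (L I) then
    (gFun b J.card I.card (L I) - 1) / (J.card - I.card).choose (I'.card - I.card)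
  else 0

variable {b J L}

theorem excessShare_nonneg (I I' : Finset α) : 0 ≤ excessShare b J L I I' := by
  unfold excessShare
  split_ifs with h
  · exact div_nonneg (by linarith [h.2.2]) (Nat.cast_nonneg _)
  · exact le_rfl

theorem of_excessShare_ne_zero {I I' : Finset α} (h : excessShare b J L I I' ≠ 0) :
    I ⊆ I' ∧ L I = 2 * I'.card - 1 ∧ 1 < gFun b J.card I.card (L I) := by
  by_contra hc
  exact h (if_neg hc)

theorem gFun_eq_zero_of_excessShare_ne_zero (hL : Antitone L) {I I' : Finset α}
    (h : excessShare b J L I I' ≠ 0) : gFun b J.card I'.card (L I') = 0 := by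
  obtain ⟨hII', hLI, -⟩ := of_excessShare_ne_zero h
  exact gFun_eq_zero_of_le (by linarith [hL hII'])

theorem sub_one_le_sum_excessShare {I : Finset α} (hI : I ⊂ J)
    (h : 1 < gFun b J.card I.card (L I)) :
    gFun b J.card I.card (L I) - 1 ≤ ∑ I' ∈ J.ssubsets, excessShare b J L I I' := by
  obtain ⟨v, hv, hIv, hvJ⟩ := exists_eq_two_mul_sub_one_of_one_lt_gFun h
  set c := v - I.card
  set S := (J \ I).powersetCard c
  have hdisj : ∀ T ∈ S, Disjoint I T := fun T hT =>
    disjoint_of_subset_right (mem_powersetCard.1 hT).1 disjoint_sdiff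
  have hcard : ∀ T ∈ S, (I ∪ T).card = v := fun T hT => by
    rw [card_union_of_disjoint (hdisj T hT), (mem_powersetCard.1 hT).2]; omega
  have hinj : Set.InjOn (I ∪ ·) S := fun T₁ h₁ T₂ h₂ (hT : I ∪ T₁ = I ∪ T₂) => by
    rw [← union_sdiff_cancel_left (hdisj T₁ h₁), hT, union_sdiff_cancel_left (hdisj T₂ h₂)]
  have hsub : S.image (I ∪ ·) ⊆ J.ssubsets := fun I' hI' => by
    obtain ⟨T, hT, rfl⟩ := mem_image.1 hI'
    refine mem_ssubsets.2 (ssubset_of_subset_of_ne ?_ fun hEq => ?_)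
    · exact union_subset hI.subset ((mem_powersetCard.1 hT).1.trans sdiff_subset)
    · have := hcard T hT; rw [hEq] at this; omega
  have hshare : ∀ T ∈ S, excessShare b J L I (I ∪ T) =
      (gFun b J.card I.card (L I) - 1) / (J.card - I.card).choose c := fun T hT => by
    rw [excessShare, if_pos ⟨subset_union_left, by rw [hcard T hT]; exact hv, h⟩, hcard T hT]
  have hchoose : (0 : ℝ) < (J.card - I.card).choose c := by
    exact_mod_cast Nat.choose_pos (by omega)
  calc gFun b J.card I.card (L I) - 1
      = ∑ T ∈ S, (gFun b J.card I.card (L I) - 1) / (J.card - I.card).choose c := by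
        rw [sum_const, card_powersetCard, card_sdiff_of_subset hI.subset, nsmul_eq_mul]
        field_simp
    _ = ∑ I' ∈ S.image (I ∪ ·), excessShare b J L I I' := by
        rw [sum_image hinj]; exact sum_congr rfl fun T hT => (hshare T hT).symm
    _ ≤ ∑ I' ∈ J.ssubsets, excessShare b J L I I' :=
        sum_le_sum_of_subset_of_nonneg hsub fun I' _ _ => excessShare_nonneg I I'

theorem excessShare_le_gExcess (hb : 2 ≤ b) (I I' : Finset α) :
    excessShare b J L I I' ≤ gExcess (1 / (b - 1)) (J.card - I.card) (I'.card - I.card) /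
      (J.card - I.card).choose (I'.card - I.card) := by
  unfold excessShare
  split_ifs with h
  · obtain ⟨-, hLI, hg⟩ := h
    obtain ⟨v, hv, hIv, -⟩ := exists_eq_two_mul_sub_one_of_one_lt_gFun hg
    rw [hLI, gFun_two_mul_sub_one hb (by omega), add_sub_cancel_left]
  · have hx : (0 : ℝ) ≤ 1 / (b - 1) :=
      one_div_nonneg.2 (sub_nonneg.2 (by exact_mod_cast (by omega : 1 ≤ b)))
    exact div_nonneg (gExcess_nonneg hx _ _) (Nat.cast_nonneg _)

theorem sum_excessShare_le_one (hJb : J.card ≤ b) {I' : Finset α} (hI' : I' ⊂ J) :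
    ∑ I ∈ J.ssubsets, excessShare b J L I I' ≤ 1 := by
  by_cases hzero : ∀ I ∈ J.ssubsets, excessShare b J L I I' = 0
  · rw [sum_eq_zero hzero]; exact zero_le_one
  push Not at hzero
  obtain ⟨I₀, -, hI₀⟩ := hzero
  have hb : 2 ≤ b := by
    obtain ⟨-, hLI, hg⟩ := of_excessShare_ne_zero hI₀
    obtain ⟨v, hv, hIv, hvJ⟩ := exists_eq_two_mul_sub_one_of_one_lt_gFun hg
    omega
  have hbR : (2 : ℝ) ≤ b := by exact_mod_cast hb
  have hu : I'.card < J.card := card_lt_card hI'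
  have hux : ((I'.card : ℝ) + (J.card - I'.card : ℕ) - 1) * (1 / (b - 1)) ≤ 1 := by
    rw [Nat.cast_sub hu.le, add_sub_cancel, mul_one_div, div_le_one (by linarith)]
    have : (J.card : ℝ) ≤ b := by exact_mod_cast hJb
    linarith
  calc ∑ I ∈ J.ssubsets, excessShare b J L I I' = ∑ I ∈ I'.powerset, excessShare b J L I I' := by
        refine (sum_subset (fun I hI => mem_ssubsets.2 ((mem_powerset.1 hI).trans_ssubset hI'))
          fun I _ hI => ?_).symm
        by_contra hne
        exact hI (mem_powerset.2 (of_excessShare_ne_zero hne).1)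
    _ ≤ ∑ I ∈ I'.powerset, gExcess (1 / (b - 1)) (J.card - I.card) (I'.card - I.card) /
          (J.card - I.card).choose (I'.card - I.card) :=
        sum_le_sum fun I _ => excessShare_le_gExcess hb I I'
    _ ≤ 1 := by
        rw [sum_powerset_gExcess_div_eq _ hu.le]
        exact sum_choose_mul_gExcess_div_le_one (one_div_nonneg.2 (by linarith)) (by omega) hux

theorem gFun_add_sum_excessShare_le (hL : Antitone L) (hJb : J.card ≤ b) {I : Finset α}
    (hI : I ⊂ J) :
    gFun b J.card I.card (L I) + ∑ I'' ∈ J.ssubsets, excessShare b J L I'' I ≤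
      1 + ∑ I' ∈ J.ssubsets, excessShare b J L I I' := by
  have hout : 0 ≤ ∑ I' ∈ J.ssubsets, excessShare b J L I I' :=
    sum_nonneg fun I' _ => excessShare_nonneg I I'
  by_cases hin : ∑ I'' ∈ J.ssubsets, excessShare b J L I'' I = 0
  · rw [hin, add_zero]
    by_cases hg : 1 < gFun b J.card I.card (L I)
    · linarith [sub_one_le_sum_excessShare hI hg]
    · linarith
  · obtain ⟨I'', -, hI''⟩ := exists_ne_zero_of_sum_ne_zero hin
    rw [gFun_eq_zero_of_excessShare_ne_zero hL hI'', zero_add]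
    linarith [sum_excessShare_le_one (L := L) hJb hI]

theorem sum_gFun_ssubsets_le (hL : Antitone L) (hJb : J.card ≤ b) :
    ∑ I ∈ J.ssubsets, gFun b J.card I.card (L I) ≤ 2 ^ J.card - 1 := by
  calc ∑ I ∈ J.ssubsets, gFun b J.card I.card (L I) ≤ J.ssubsets.card :=
        sum_le_card_of_transfer _ _ (excessShare b J L) fun I hI =>
          gFun_add_sum_excessShare_le hL hJb (mem_ssubsets.1 hI)
    _ = 2 ^ J.card - 1 := by
        rw [ssubsets, card_erase_of_mem (mem_powerset_self J), card_powerset,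
          Nat.cast_sub Nat.one_le_two_pow]
        norm_num

end Discharging

theorem claim_G_medium_m_general (b s : ℕ) (hbs : s ≤ b)
    (J : Finset (Fin s)) (m : ℕ) (k : Fin s → ℕ) :
    GFun b s J m k 0 ≤ (2 : ℝ) ^ J.card - 1 := by
  have hL : Antitone fun I : Finset (Fin s) => (m : ℤ) - ∑ t ∈ I ∪ Jᶜ, (k t : ℤ) :=
    fun I I' h => by
      have := sum_le_sum_of_subset_of_nonneg (f := fun t => (k t : ℤ))
        (union_subset_union_left (t := Jᶜ) h) fun t _ _ => Int.natCast_nonneg (k t)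
      simp only; linarith
  have hJb : J.card ≤ b := (card_le_univ J).trans (by simpa using hbs)
  simpa [GFun, filter_ne', ssubsets] using sum_gFun_ssubsets_le hL hJb

/-- For integers `b ≥ s ≥ 1`, a nonempty `J ⊆ {1,…,s}`, and `m, k` with
`|J| ≤ m < |k| + 2|J|` (where `|k| = Σ_j k_j`), one has `G(m,s,J,k,0) ≤ 2^{|J|} − 1`. -/
theorem claim_G_medium_m (b s : ℕ) (hs : 1 ≤ s) (hbs : s ≤ b)
    (J : Finset (Fin s)) (hJ : J.Nonempty) (m : ℕ) (k : Fin s → ℕ)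
    (hm1 : J.card ≤ m) (hm2 : m < (∑ j, k j) + 2 * J.card) :
    GFun b s J m k 0 ≤ (2 : ℝ) ^ J.card - 1 :=
  claim_G_medium_m_general b s hbs J m k
end

section
/- Fix an integer base b ≥ 2. If g₀ ≥ 0 is a real constant such that G(m,s,J,k,0) ≤ g₀ for all integers s ≥ 1, m ∈ ℕ, subsets J ⊆ {1,…,s}, and vectors k ∈ ℕ^s, then G(m,s,J,k,d) ≤ g₀ for all integers s ≥ 1, m ∈ ℕ, subsets J ⊆ {1,…,s}, and vectors k, d ∈ ℕ^s. -/
/-! `G(m,s,J,k,d)` depends on `m` and `d` only through `m − |d|_J`, so for `|d|_J ≤ m` it equals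
`G(m − |d|_J,s,J,k,0)`. Otherwise every argument of `g` is negative, hence `≤ 2|I|`, and `G` vanishes. -/

open Finset
open scoped Classical

theorem gFun_of_le_two_mul {b j i : ℕ} {l : ℤ} (hl : l ≤ 2 * (i : ℤ)) : gFun b j i l = 0 :=
  if_pos hl

section GFun

variable {b s : ℕ} {J : Finset (Fin s)} {k d : Fin s → ℕ}

theorem GFun_add_sum_eq (m : ℕ) :
    GFun b s J (m + ∑ j ∈ J, d j) k d = GFun b s J m k 0 := by
  unfold GFun
  refine Finset.sum_congr rfl fun I _ => congrArg _ ?_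
  push_cast
  simp only [Pi.zero_apply, Nat.cast_zero, Finset.sum_const_zero]
  ring

theorem GFun_eq_zero_of_lt_sum {m : ℕ} (hm : m < ∑ j ∈ J, d j) : GFun b s J m k d = 0 := by
  refine Finset.sum_eq_zero fun I _ => gFun_of_le_two_mul ?_
  have hk : 0 ≤ ∑ j ∈ I ∪ Jᶜ, (k j : ℤ) := Finset.sum_nonneg fun j _ => by positivity
  have hd : (m : ℤ) < ∑ j ∈ J, (d j : ℤ) := by exact_mod_cast hm
  omega

end GFun

theorem claim_G_reduce_d_general (b : ℕ) (g0 : ℝ) (hg0 : 0 ≤ g0)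
    (h : ∀ (s : ℕ), 1 ≤ s → ∀ (m : ℕ) (J : Finset (Fin s)) (k : Fin s → ℕ),
      GFun b s J m k 0 ≤ g0) :
    ∀ (s : ℕ), 1 ≤ s → ∀ (m : ℕ) (J : Finset (Fin s)) (k d : Fin s → ℕ),
      GFun b s J m k d ≤ g0 := by
  intro s hs m J k d
  rcases le_or_gt (∑ j ∈ J, d j) m with hm | hm
  · obtain ⟨m', rfl⟩ := Nat.exists_eq_add_of_le' hm
    rw [GFun_add_sum_eq]
    exact h s hs m' J k
  · rw [GFun_eq_zero_of_lt_sum hm]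
    exact hg0

/-- If `g₀ ≥ 0` is a constant with `G(m,s,J,k,0) ≤ g₀` for all `s ≥ 1`, `m`, `J ⊆ {1,…,s}`
and `k ∈ ℕ^s`, then `G(m,s,J,k,d) ≤ g₀` for all such data and all `d ∈ ℕ^s`. -/
theorem claim_G_reduce_d (b : ℕ) (hb : 2 ≤ b) (g0 : ℝ) (hg0 : 0 ≤ g0)
    (h : ∀ (s : ℕ), 1 ≤ s → ∀ (m : ℕ) (J : Finset (Fin s)) (k : Fin s → ℕ),
      GFun b s J m k 0 ≤ g0) :
    ∀ (s : ℕ), 1 ≤ s → ∀ (m : ℕ) (J : Finset (Fin s)) (k d : Fin s → ℕ),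
      GFun b s J m k d ≤ g0 :=
  claim_G_reduce_d_general b g0 hg0 h
end

section
/- Let b, s be integers with b ≥ s ≥ 1 and let J ⊆ {1,…,s} be nonempty. For every integer m with |J| ≤ m < 2|J|, one has G(m,s,J,0,0) ≤ G(2|J|−1,s,J,0,0) = 2^{|J|} − 1, where 0 denotes the zero vector in ℕ^s. -/
open Finset
open scoped Classical

lemma div_sub_one_pow_le {b : ℝ} {t : ℕ} (ht : t < b) : (b / (b - 1)) ^ t ≤ b / (b - t) := by
  rcases Nat.eq_zero_or_pos t with rfl | ht0
  · simp [(show (0 : ℝ) < b by exact_mod_cast ht).ne']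
  have hb : 1 < b := lt_of_le_of_lt (by exact_mod_cast ht0) ht
  have hinv : 1 / b ≤ 2 := (div_le_one_of_le₀ hb.le (by positivity)).trans one_le_two
  have bernoulli : 1 + t * (-1 / b) ≤ (1 + -1 / b) ^ t :=
    one_add_mul_le_pow (by rw [neg_div, neg_le_neg_iff]; exact hinv) t
  have h1 : 1 + t * (-1 / b) = (b - t) / b := by field_simp; ring
  have h2 : 1 + -1 / b = (b - 1) / b := by field_simp; ring
  rw [h1, h2] at bernoulli
  calc (b / (b - 1)) ^ t = (((b - 1) / b) ^ t)⁻¹ := by rw [← inv_pow, inv_div]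
    _ ≤ ((b - t) / b)⁻¹ := inv_anti₀ (div_pos (by linarith) (by linarith)) bernoulli
    _ = b / (b - t) := inv_div _ _

section

variable {b j i : ℕ} {l : ℤ}

lemma gFun_of_le (h : l ≤ 2 * i) : gFun b j i l = 0 := if_pos h

lemma gFun_two_mul_add_one : gFun b j i (2 * i + 1) = (b / (b - 1 : ℝ)) ^ (j - i - 1) := by
  rw [gFun, if_neg (by omega), if_pos rfl]

lemma gFun_of_odd (h₁ : 2 * i + 1 < l) (h₂ : l < j + i) (hl : Odd l) :
    gFun b j i l = 1 + hFun b j i l := by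
  rw [gFun, if_neg (by omega), if_neg (by omega), if_pos ⟨hl, h₂⟩]

lemma gFun_of_add_le (hij : i < j) (h : j + i ≤ l) : gFun b j i l = 1 := by
  unfold gFun
  rw [if_neg (by omega)]
  split_ifs with h₁ h₂
  · rw [show j - i - 1 = 0 by omega, pow_zero]
  · omega
  · rfl

lemma gFun_le_one_of_even (hl : Even l) : gFun b j i l ≤ 1 := by
  unfold gFun
  split_ifs with h₁ h₂ h₃
  · exact zero_le_one
  · exact absurd hl (by rw [Int.not_even_iff_odd, h₂]; exact odd_two_mul_add_one _)
  · exact absurd hl (Int.not_even_iff_odd.mpr h₃.1)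
  · exact le_rfl

end

lemma hFun_two_mul_add (b j a c : ℕ) :
    hFun b (j + a + c) j (2 * j + a) =
      (b : ℝ) ^ c / ((b : ℝ) - 1) ^ (a + c) * ((a + c - 1).choose a : ℝ) := by
  rw [hFun, show ((j + a + c : ℕ) : ℤ) + j - (2 * j + a) = (c : ℤ) by push_cast; ring,
    zpow_natCast, show (2 * (j : ℤ) + a - 2 * j).toNat = a by omega,
    show j + a + c - j = a + c by omega]

lemma choose_mul_div_pow_sub_one_le {b i t : ℕ} (hb : i + t + 1 ≤ b) :
    ((i + t + 1).choose i : ℝ) * ((b / (b - 1 : ℝ)) ^ t - 1) ≤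
      (i + t + 1).choose (i + 1) := by
  have hbt : (i + 1 : ℝ) ≤ b - t := by
    rw [le_sub_iff_add_le]; exact_mod_cast (by omega : i + 1 + t ≤ b)
  have hpow : (b / (b - 1 : ℝ)) ^ t - 1 ≤ t / (b - t) := by
    have h := div_sub_one_pow_le (b := (b : ℝ)) (t := t) (by linarith)
    have hsub : (b : ℝ) / (b - t) - 1 = t / (b - t) := by
      rw [div_sub_one (by linarith), sub_sub_cancel]
    linarith
  have hratio : ((i + t + 1).choose i : ℝ) * (t + 1) = (i + t + 1).choose (i + 1) * (i + 1) := by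
    have h := Nat.choose_succ_right_eq (i + t + 1) i
    rw [show i + t + 1 - i = t + 1 by omega] at h
    exact_mod_cast h.symm
  calc ((i + t + 1).choose i : ℝ) * ((b / (b - 1 : ℝ)) ^ t - 1)
      ≤ (i + t + 1).choose i * ((t + 1) / (i + 1)) := by
        gcongr
        exact hpow.trans (div_le_div₀ (by positivity) (by linarith) (by positivity) hbt)
    _ = (i + t + 1).choose (i + 1) := by
        rw [← mul_div_assoc, hratio, mul_div_assoc, div_self (by positivity), mul_one]

lemma choose_mul_hFun_le {b j a c : ℕ} (ha : 2 ≤ a) (hc : 2 * c ≤ b) (hja : j + a < b) :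
    ((j + a + c).choose j : ℝ) * hFun b (j + a + c) j (2 * j + a) ≤
      (j + a + c).choose (j + a) := by
  have hb : (j + a + 1 : ℝ) ≤ b := by exact_mod_cast hja
  have hb1 : (0 : ℝ) < b - 1 := by
    linarith [(show (1 : ℝ) < b by exact_mod_cast (by omega : 1 < b))]
  have hpow : (b / (b - 1 : ℝ)) ^ c ≤ 2 := by
    have hcb : (2 * c : ℝ) ≤ b := by exact_mod_cast hc
    refine (div_sub_one_pow_le (by linarith)).trans ?_
    rw [div_le_iff₀ (by linarith)]
    linarith
  have hchoose : ((a + c - 1).choose a : ℝ) ≤ (a + c).choose a := by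
    exact_mod_cast Nat.choose_le_choose a (Nat.sub_le _ _)
  have htrinomial : ((j + a + c).choose j : ℝ) * (a + c).choose a =
      (j + a + c).choose (j + a) * (j + a).choose a := by
    have h := Nat.choose_mul (n := j + a + c) (Nat.le_add_right j a)
    rw [(Nat.choose_symm_add : (j + a).choose j = (j + a).choose a),
      show j + a + c - j = a + c by omega, Nat.add_sub_cancel_left] at h
    exact_mod_cast h.symm
  have hsmall : 2 * ((j + a).choose a : ℝ) ≤ (b - 1) ^ a := by
    have hfact : (2 : ℝ) ≤ a.factorial := by
      exact_mod_cast (Nat.factorial_le ha : (2 : ℕ).factorial ≤ a.factorial)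
    have hbase : ((j + a : ℕ) : ℝ) ^ a ≤ (b - 1) ^ a := by
      gcongr; push_cast; linarith
    calc 2 * ((j + a).choose a : ℝ)
        ≤ a.factorial * (((j + a : ℕ) : ℝ) ^ a / a.factorial) := by
          gcongr; exact Nat.choose_le_pow_div a (j + a)
      _ = ((j + a : ℕ) : ℝ) ^ a := mul_div_cancel₀ _ (by positivity)
      _ ≤ (b - 1) ^ a := hbase
  have hsplit : (b : ℝ) ^ c / (b - 1) ^ (a + c) = (b / (b - 1)) ^ c / (b - 1) ^ a := by
    rw [pow_add, div_pow]; field_simp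
  rw [hFun_two_mul_add, hsplit, div_mul_eq_mul_div, ← mul_div_assoc,
    div_le_iff₀ (by positivity)]
  calc ((j + a + c).choose j : ℝ) * ((b / (b - 1)) ^ c * ((a + c - 1).choose a : ℝ))
      ≤ (j + a + c).choose j * (2 * (a + c).choose a) := by gcongr
    _ = (j + a + c).choose (j + a) * (2 * (j + a).choose a) := by
        rw [mul_left_comm, htrinomial]; ring
    _ ≤ (j + a + c).choose (j + a) * (b - 1) ^ a := by gcongr

lemma choose_mul_gFun_sub_one_le {b n i j : ℕ} (hb : n ≤ b) (hn : n ≤ 2 * i + 1)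
    (hj : 2 * i + 1 < n + j) (hji : j ≤ i) :
    (n.choose j : ℝ) * (gFun b n j ((2 * i + 1 : ℕ) : ℤ) - 1) ≤
      n.choose (2 * i + 1 - j) := by
  rcases hji.eq_or_lt with rfl | hji
  · obtain ⟨t, rfl⟩ : ∃ t, n = j + t + 1 := ⟨n - j - 1, by omega⟩
    push_cast
    rw [gFun_two_mul_add_one, show j + t + 1 - j - 1 = t by omega,
      show 2 * j + 1 - j = j + 1 by omega]
    exact choose_mul_div_pow_sub_one_le hb
  · obtain ⟨a, c, ha, rfl⟩ : ∃ a c, 2 * i + 1 = 2 * j + a ∧ n = j + a + c :=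
      ⟨2 * i + 1 - 2 * j, n + j - (2 * i + 1), by omega, by omega⟩
    have hodd : Odd (2 * (j : ℤ) + a) := ⟨i, by omega⟩
    rw [ha, show 2 * j + a - j = j + a by omega]
    push_cast
    rw [gFun_of_odd (by omega) (by push_cast; omega) hodd, add_sub_cancel_left]
    exact choose_mul_hFun_le (by omega) (by omega) (by omega)

lemma sum_choose_mul_gFun_le_of_odd {b n i : ℕ} (hb : n ≤ b) (hn : n ≤ 2 * i + 1)
    (hn' : 2 * i + 1 < 2 * n) :
    ∑ j ∈ range n, (n.choose j : ℝ) * gFun b n j ((2 * i + 1 : ℕ) : ℤ) ≤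
      ∑ j ∈ range n, (n.choose j : ℝ) := by
  set m := 2 * i + 1 with hm
  have hsplit (f : ℕ → ℝ) : ∑ j ∈ range n, f j =
      ∑ j ∈ range (m + 1 - n), f j + ∑ j ∈ Ico (m + 1 - n) (i + 1), f j +
        ∑ j ∈ Ico (i + 1) n, f j := by
    rw [sum_range_add_sum_Ico _ (by omega), sum_range_add_sum_Ico _ (by omega)]
  have hlow : ∀ j ∈ range (m + 1 - n), (n.choose j : ℝ) * gFun b n j m = n.choose j := by
    intro j hj
    rw [mem_range] at hj
    rw [gFun_of_add_le (by omega) (by omega), mul_one]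
  have hmid : ∀ j ∈ Ico (m + 1 - n) (i + 1),
      (n.choose j : ℝ) * gFun b n j m ≤ n.choose j + n.choose (m - j) := by
    intro j hj
    rw [mem_Ico] at hj
    have h := choose_mul_gFun_sub_one_le hb hn (by omega) (by omega : j ≤ i)
    rw [mul_sub, mul_one] at h
    linarith
  have hhigh : ∀ j ∈ Ico (i + 1) n, (n.choose j : ℝ) * gFun b n j m = 0 := by
    intro j hj
    rw [mem_Ico] at hj
    rw [gFun_of_le (by omega), mul_zero]
  have hreflect : ∑ j ∈ Ico (m + 1 - n) (i + 1), (n.choose (m - j) : ℝ) =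
      ∑ j ∈ Ico (i + 1) n, (n.choose j : ℝ) := by
    rw [sum_Ico_reflect (fun j => (n.choose j : ℝ)) _ (by omega),
      show m + 1 - (i + 1) = i + 1 by omega, show m + 1 - (m + 1 - n) = n by omega]
  rw [hsplit, hsplit (fun j => (n.choose j : ℝ)), sum_congr rfl hlow, sum_eq_zero hhigh]
  calc _ ≤ ∑ j ∈ range (m + 1 - n), (n.choose j : ℝ) +
          ∑ j ∈ Ico (m + 1 - n) (i + 1), ((n.choose j : ℝ) + n.choose (m - j)) + 0 := by
        gcongr with j hj
        exact hmid j hj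
    _ = _ := by rw [sum_add_distrib, hreflect, add_zero, ← add_assoc]

lemma sum_choose_mul_gFun_le {b n m : ℕ} (hb : n ≤ b) (hm₁ : n ≤ m) (hm₂ : m < 2 * n) :
    ∑ j ∈ range n, (n.choose j : ℝ) * gFun b n j m ≤
      ∑ j ∈ range n, (n.choose j : ℝ) := by
  rcases Nat.even_or_odd m with hm | ⟨i, rfl⟩
  · exact sum_le_sum fun j _ =>
      mul_le_of_le_one_right (by positivity) (gFun_le_one_of_even (by exact_mod_cast hm))
  · exact sum_choose_mul_gFun_le_of_odd hb hm₁ hm₂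

lemma sum_range_choose_eq_two_pow_sub_one (R : Type*) [CommRing R] (n : ℕ) :
    ∑ j ∈ range n, (n.choose j : R) = 2 ^ n - 1 := by
  have h := Nat.sum_range_choose n
  rw [sum_range_succ, Nat.choose_self] at h
  rw [eq_sub_iff_add_eq]
  exact_mod_cast congrArg (Nat.cast : ℕ → R) h

lemma sum_choose_mul_gFun_two_mul_sub_one (b n : ℕ) :
    ∑ j ∈ range n, (n.choose j : ℝ) * gFun b n j ((2 * n - 1 : ℕ) : ℤ) = 2 ^ n - 1 := by
  rw [← sum_range_choose_eq_two_pow_sub_one]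
  refine sum_congr rfl fun j hj => ?_
  rw [mem_range] at hj
  rw [gFun_of_add_le hj (by omega), mul_one]

lemma GFun_zero_zero (b s : ℕ) (J : Finset (Fin s)) (m : ℕ) :
    GFun b s J m 0 0 = ∑ j ∈ range J.card, (J.card.choose j : ℝ) * gFun b J.card j m := by
  simp only [GFun, Pi.zero_apply, Nat.cast_zero, sum_const_zero, sub_zero]
  rw [filter_ne', sum_erase_eq_sub (mem_powerset_self J),
    sum_powerset_apply_card (fun c => gFun b J.card c m), sum_range_succ, Nat.choose_self,
    one_smul, add_sub_cancel_right]
  simp only [nsmul_eq_mul]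

theorem claim_G_max_at_odd_general (b s : ℕ) (hbs : s ≤ b)
    (J : Finset (Fin s)) (m : ℕ)
    (hm1 : J.card ≤ m) (hm2 : m < 2 * J.card) :
    GFun b s J m 0 0 ≤ GFun b s J (2 * J.card - 1) 0 0 ∧
    GFun b s J (2 * J.card - 1) 0 0 = (2 : ℝ) ^ J.card - 1 := by
  have hJb : J.card ≤ b := (card_le_univ J).trans (by simpa using hbs)
  have htop : GFun b s J (2 * J.card - 1) 0 0 = 2 ^ J.card - 1 := by
    rw [GFun_zero_zero, sum_choose_mul_gFun_two_mul_sub_one]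
  refine ⟨?_, htop⟩
  rw [htop, GFun_zero_zero, ← sum_range_choose_eq_two_pow_sub_one]
  exact sum_choose_mul_gFun_le hJb hm1 hm2

/-- For integers `b ≥ s ≥ 1` and a nonempty `J ⊆ {1,…,s}`: for every `m` with
`|J| ≤ m < 2|J|`, `G(m,s,J,0,0) ≤ G(2|J|−1,s,J,0,0) = 2^{|J|} − 1`. -/
theorem claim_G_max_at_odd (b s : ℕ) (hs : 1 ≤ s) (hbs : s ≤ b)
    (J : Finset (Fin s)) (hJ : J.Nonempty) (m : ℕ)
    (hm1 : J.card ≤ m) (hm2 : m < 2 * J.card) :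
    GFun b s J m 0 0 ≤ GFun b s J (2 * J.card - 1) 0 0 ∧
    GFun b s J (2 * J.card - 1) 0 0 = (2 : ℝ) ^ J.card - 1 :=
  claim_G_max_at_odd_general b s hbs J m hm1 hm2
end

section
/- Let b, i, j, ℓ be integers with 0 ≤ i < j ≤ b and 2i < ℓ < i + j. Then g_{j,i}(ℓ) ≤ (b/(b−1))^{i+j−ℓ}. -/
open Finset
open scoped Classical

/-!
Write `ℓ = 2i + t` and `j = i + t + e`, so that the bound reads `g ≤ q ^ e` with `q = b / (b - 1)`.
The cases `t = 1` (equality) and `g = 1` (as `q ≥ 1`) are immediate; in the remaining case put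
`y = b - 1` and `c = C(t+e-1, t) / y ^ t`, so that the claim is `1 + q ^ e c ≤ q ^ e`. Bernoulli
gives `q ^ e ≥ 1 + a` with `a = e / y ≤ 1`, and `t C(t+e-1, t) = e C(t+e-1, t-1) ≤ e (t+e-1) ^ (t-1)`
together with `t ≥ 2` and `t + e - 1 ≤ y` gives `c ≤ a / 2`; finally `(1 + a)(1 - a/2) ≥ 1`.
-/

theorem Nat.choose_mul_le_sub_mul_pow (n t : ℕ) : n.choose t * t ≤ (n + 1 - t) * n ^ (t - 1) := by
  cases t with
  | zero => simp
  | succ k =>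
    rw [Nat.choose_succ_right_eq, Nat.add_sub_add_right, Nat.add_sub_cancel, mul_comm]
    exact Nat.mul_le_mul_left _ (Nat.choose_le_pow n k)

theorem one_add_mul_le_of_two_mul_le {r a c : ℝ} (hr : 1 + a ≤ r) (ha : a ≤ 1) (hc : 0 ≤ c)
    (hca : 2 * c ≤ a) : 1 + r * c ≤ r := by
  nlinarith

theorem one_add_pow_div_pow_mul_choose_le {y : ℝ} {t e : ℕ} (ht : 2 ≤ t)
    (hy : (t + e : ℝ) ≤ y + 1) :
    1 + (y + 1) ^ e / y ^ (t + e) * ((t + e - 1).choose t : ℝ) ≤ ((y + 1) / y) ^ e := by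
  set n := t + e - 1
  have hn : ((n : ℕ) : ℝ) + 1 = t + e := by exact_mod_cast (show n + 1 = t + e by omega)
  have hny : (n : ℝ) ≤ y := by linarith
  have ht2 : (2 : ℝ) ≤ t := by exact_mod_cast ht
  have hy0 : 0 < y := by linarith
  have hchoose : (2 * n.choose t : ℝ) ≤ e * y ^ (t - 1) := by
    have key : (n.choose t * t : ℝ) ≤ e * n ^ (t - 1) := by
      exact_mod_cast (show n + 1 - t = e by omega) ▸ Nat.choose_mul_le_sub_mul_pow n t
    calc (2 * n.choose t : ℝ) ≤ n.choose t * t := by nlinarith [(n.choose t).cast_nonneg (α := ℝ)]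
      _ ≤ e * n ^ (t - 1) := key
      _ ≤ e * y ^ (t - 1) := by gcongr
  have hbernoulli : 1 + e / y ≤ ((y + 1) / y) ^ e := by
    calc 1 + e / y = 1 + e * (1 / y) := by ring
      _ ≤ (1 + 1 / y) ^ e := one_add_mul_le_pow (by linarith [one_div_pos.mpr hy0]) e
      _ = ((y + 1) / y) ^ e := by rw [one_add_div hy0.ne', add_comm y]
  have ha : e / y ≤ 1 := by
    rw [div_le_one hy0]; linarith
  have hca : 2 * (n.choose t / y ^ t) ≤ e / y := by
    rw [← mul_div_assoc, div_le_div_iff₀ (by positivity) hy0, ← pow_sub_one_mul (by omega),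
      ← mul_assoc]
    exact mul_le_mul_of_nonneg_right hchoose hy0.le
  have hsplit : (y + 1) ^ e / y ^ (t + e) * (n.choose t : ℝ) =
      ((y + 1) / y) ^ e * (n.choose t / y ^ t) := by
    rw [div_pow, pow_add]; field_simp
  rw [hsplit]
  exact one_add_mul_le_of_two_mul_le hbernoulli ha (by positivity) hca

theorem hFun_add (b i t e : ℕ) :
    hFun b (i + t + e) i (2 * i + t) =
      (b : ℝ) ^ e / ((b : ℝ) - 1) ^ (t + e) * ((t + e - 1).choose t : ℝ) := by
  have hexp : ((i + t + e : ℕ) : ℤ) + i - (2 * i + t) = e := by push_cast; ring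
  have hsub : i + t + e - i = t + e := by omega
  have ht : ((2 * i + t : ℤ) - 2 * i).toNat = t := by omega
  rw [hFun, hexp, hsub, ht, zpow_natCast]

theorem claim_g_loose_bound_general (b i j : ℕ) (hb : 2 ≤ b) (hjb : j ≤ b)
    (l : ℤ) (h1 : 2 * (i : ℤ) < l) (h2 : l < (i : ℤ) + (j : ℤ)) :
    gFun b j i l ≤ ((b : ℝ) / ((b : ℝ) - 1)) ^ ((i : ℤ) + (j : ℤ) - l) := by
  obtain ⟨t, rfl⟩ : ∃ t : ℕ, l = 2 * i + t := ⟨(l - 2 * i).toNat, by omega⟩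
  obtain ⟨e, rfl⟩ : ∃ e : ℕ, j = i + t + e := ⟨j - i - t, by omega⟩
  have hexp : (i : ℤ) + ((i + t + e : ℕ) : ℤ) - (2 * i + t) = e := by push_cast; ring
  have hq : 1 ≤ (b : ℝ) / (b - 1) := by
    rw [one_le_div (by linarith [(show (2 : ℝ) ≤ b by exact_mod_cast hb)])]; linarith
  rw [hexp, zpow_natCast]
  unfold gFun
  split_ifs
  · omega
  · simp [show t = 1 by omega, add_assoc]
  · have := one_add_pow_div_pow_mul_choose_le (y := (b : ℝ) - 1) (t := t) (e := e) (by omega)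
      (by rw [sub_add_cancel]; exact_mod_cast (by omega : t + e ≤ b))
    simpa [hFun_add] using this
  · exact one_le_pow₀ hq

/-- For integers `b, i, j, ℓ` with `0 ≤ i < j ≤ b` and `2i < ℓ < i+j`,
`g_{j,i}(ℓ) ≤ (b/(b−1))^{i+j−ℓ}`. -/
theorem claim_g_loose_bound (b i j : ℕ) (hb : 2 ≤ b) (hij : i < j) (hjb : j ≤ b)
    (l : ℤ) (h1 : 2 * (i : ℤ) < l) (h2 : l < (i : ℤ) + (j : ℤ)) :
    gFun b j i l ≤ ((b : ℝ) / ((b : ℝ) - 1)) ^ ((i : ℤ) + (j : ℤ) - l) :=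
  claim_g_loose_bound_general b i j hb hjb l h1 h2
end

section
/- Let b, s be integers with b ≥ s ≥ 2 and set s̃ := ⌊s/2⌋ − 1. Then R(b,s) := (1/2^s) · Σ_{j=0}^{s̃} binom(s,j) · (b/(b−1))^{s−j} ≤ 1. -/
open Finset

/-! Put `x = b/(b-1)`, so `(x - 1)(s - 1) ≤ 1`. Each term `C(s,j) x^(s-j)` with `j < s/2` is at
most its mirror term `C(s,s-1-j) x^(j+1)`, so twice the sum is at most `(1 + x)^s`. For `s ≥ 4`,
`(1 + x)^s ≤ 2^s exp(s(x-1)/2) ≤ 2^s e^(2/3) < 2^(s+1)`; for `s ≤ 3` the sum is the single term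
`x^s ≤ 2^s`. -/

/- With `d = s - 2j - 1` this reads `x^(s-2j-1) ≤ (s-j)/(j+1) = C(s,j+1)/C(s,j)`. -/
lemma pow_mul_le_of_sub_one_mul_le {x s : ℝ} (hx : 1 ≤ x) (hxs : (x - 1) * s ≤ 2) (d : ℕ) :
    x ^ d * (s + 1 - d) ≤ s + 1 + d := by
  induction d with
  | zero => simp
  | succ d ih =>
    have bernoulli : 1 + (d + 1 : ℕ) * (x - 1) ≤ x ^ (d + 1) := by
      simpa using one_add_mul_le_pow (by linarith : (-2 : ℝ) ≤ x - 1) (d + 1)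
    calc x ^ (d + 1) * (s + 1 - (d + 1 : ℕ)) = x * (x ^ d * (s + 1 - d)) - x ^ (d + 1) := by
          push_cast; ring
      _ ≤ x * (s + 1 + d) - (1 + (d + 1 : ℕ) * (x - 1)) := by
          gcongr
      _ ≤ s + 1 + (d + 1 : ℕ) := by push_cast; linarith

lemma choose_mul_pow_le_choose_succ_mul_pow {x : ℝ} {s j : ℕ} (hx : 1 ≤ x)
    (hxs : (x - 1) * s ≤ 2) (hj : 2 * j + 1 ≤ s) :
    s.choose j * x ^ (s - j) ≤ s.choose (j + 1) * x ^ (j + 1) := by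
  set d := s - (2 * j + 1)
  have hsd : (s : ℝ) = d + 2 * j + 1 := by norm_cast; omega
  have hpow : x ^ d * (j + 1) ≤ s - j := by
    nlinarith [pow_mul_le_of_sub_one_mul_le hx hxs d]
  have hchoose : (s.choose (j + 1) : ℝ) * (j + 1) = s.choose j * (s - j) := by
    have h := congrArg (Nat.cast (R := ℝ)) (Nat.choose_succ_right_eq s j)
    push_cast [Nat.cast_sub (by omega : j ≤ s)] at h
    exact h
  have hcoeff : s.choose j * x ^ d ≤ s.choose (j + 1) := by
    refine le_of_mul_le_mul_right ?_ (by positivity : (0 : ℝ) < j + 1)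
    rw [hchoose, mul_assoc]
    gcongr
  calc s.choose j * x ^ (s - j) = s.choose j * x ^ d * x ^ (j + 1) := by
        rw [mul_assoc, ← pow_add]; congr 2; omega
    _ ≤ s.choose (j + 1) * x ^ (j + 1) := by gcongr

lemma sum_range_add_sum_range_reflect_le {M : Type*} [AddCommMonoid M] [PartialOrder M]
    [IsOrderedAddMonoid M] {f : ℕ → M} {m n : ℕ} (hf : ∀ k, 0 ≤ f k) (hmn : 2 * m ≤ n) :
    ∑ j ∈ range m, f j + ∑ j ∈ range m, f (n - 1 - j) ≤ ∑ k ∈ range n, f k := by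
  rcases Nat.eq_zero_or_pos m with rfl | hm
  · simpa using sum_nonneg fun k _ => hf k
  obtain ⟨n, rfl⟩ : ∃ n', n = n' + 1 := ⟨n - 1, by omega⟩
  have hreflect : ∑ j ∈ range m, f (n - j) = ∑ k ∈ Ico (n + 1 - m) (n + 1), f k := by
    rw [range_eq_Ico, sum_Ico_reflect f 0 (by omega), Nat.sub_zero]
  rw [Nat.add_sub_cancel, hreflect, ← sum_range_add_sum_Ico f (by omega : n + 1 - m ≤ n + 1)]
  gcongr
  · exact fun k _ _ => hf k
  · omega

lemma two_mul_sum_choose_mul_pow_le {x : ℝ} {s : ℕ} (hx : 1 ≤ x) (hxs : (x - 1) * s ≤ 2) :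
    2 * ∑ j ∈ range (s / 2), (s.choose j : ℝ) * x ^ (s - j) ≤ (1 + x) ^ s := by
  set f : ℕ → ℝ := fun k => s.choose k * x ^ (s - k)
  have hf : ∀ k, 0 ≤ f k := fun k => by positivity
  have hpair : ∑ j ∈ range (s / 2), f j ≤ ∑ j ∈ range (s / 2), f (s - 1 - j) := by
    refine sum_le_sum fun j hj => ?_
    have hj : 2 * j + 1 < s := by rw [mem_range] at hj; omega
    simp only [f, show s - 1 - j = s - (j + 1) by omega, Nat.choose_symm (by omega : j + 1 ≤ s),
      Nat.sub_sub_self (by omega : j + 1 ≤ s)]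
    exact choose_mul_pow_le_choose_succ_mul_pow hx hxs hj.le
  calc 2 * ∑ j ∈ range (s / 2), f j
      ≤ ∑ j ∈ range (s / 2), f j + ∑ j ∈ range (s / 2), f (s - 1 - j) := by
        rw [two_mul]; exact add_le_add_right hpair _
    _ ≤ ∑ k ∈ range s, f k := sum_range_add_sum_range_reflect_le hf (by omega)
    _ ≤ ∑ k ∈ range (s + 1), f k := by rw [sum_range_succ]; linarith [hf s]
    _ = (1 + x) ^ s := by simp [f, add_pow, mul_comm]

lemma one_add_pow_le_two_pow_succ {x : ℝ} {s : ℕ} (hx : -1 ≤ x) (hxs : (x - 1) * s ≤ 4 / 3) :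
    (1 + x) ^ s ≤ 2 ^ (s + 1) := by
  have hhalf : ((1 + x) / 2) ^ s ≤ Real.exp (2 / 3) := calc
    ((1 + x) / 2) ^ s ≤ Real.exp ((x - 1) / 2) ^ s := by
        gcongr
        · linarith
        · linarith [Real.add_one_le_exp ((x - 1) / 2)]
    _ = Real.exp (s * ((x - 1) / 2)) := (Real.exp_nat_mul _ _).symm
    _ ≤ Real.exp (2 / 3) := by gcongr; linarith
  have hexp : Real.exp (2 / 3) ≤ 2 :=
    (Real.exp_le_exp.mpr (by linarith [Real.log_two_gt_d9])).trans (Real.exp_log two_pos).le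
  calc (1 + x) ^ s = 2 ^ s * ((1 + x) / 2) ^ s := by rw [div_pow]; field_simp
    _ ≤ 2 ^ s * 2 := by gcongr; linarith
    _ = 2 ^ (s + 1) := (pow_succ 2 s).symm

theorem claim_Rbs_le_one_general (b s : ℕ) (hbs : s ≤ b) :
    (1 / (2 : ℝ) ^ s) *
      ∑ j ∈ Finset.range (s / 2), (Nat.choose s j : ℝ) * ((b : ℝ) / ((b : ℝ) - 1)) ^ (s - j)
      ≤ 1 := by
  rw [one_div, inv_mul_le_iff₀ (by positivity), mul_one]
  obtain hs | hs := Nat.lt_or_ge s 2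
  · simp [Nat.div_eq_of_lt hs]
  have hb : (s : ℝ) ≤ b := by exact_mod_cast hbs
  have hs' : (2 : ℝ) ≤ s := by exact_mod_cast hs
  set x := (b : ℝ) / (b - 1)
  have hx : x - 1 = 1 / (b - 1) := by
    rw [div_sub_one (by linarith)]
    ring
  have hx1 : 1 ≤ x := by
    linarith [show 0 ≤ x - 1 by rw [hx]; exact div_nonneg zero_le_one (by linarith)]
  obtain hs4 | hs4 := Nat.lt_or_ge s 4
  · have hx2 : x ≤ 2 := by
      linarith [show x - 1 ≤ 1 by rw [hx, div_le_one (by linarith)]; linarith]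
    rw [show s / 2 = 1 by omega, sum_range_one, Nat.choose_zero_right, Nat.cast_one, one_mul,
      Nat.sub_zero]
    exact pow_le_pow_left₀ (by linarith) hx2 s
  · have hs4' : (4 : ℝ) ≤ s := by exact_mod_cast hs4
    have hxs : (x - 1) * s ≤ 4 / 3 := by
      rw [hx, one_div_mul_eq_div, div_le_iff₀ (by linarith)]
      linarith
    linarith [two_mul_sum_choose_mul_pow_le hx1 (hxs.trans (by norm_num)),
      one_add_pow_le_two_pow_succ (by linarith) hxs, pow_succ (2 : ℝ) s]

/-- For integers `b ≥ s ≥ 2` with `s̃ = ⌊s/2⌋ − 1`,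
`R(b,s) = 2^{-s} Σ_{j=0}^{s̃} C(s,j) (b/(b−1))^{s−j} ≤ 1`.
(The sum over `j = 0,…,s̃ = s/2 − 1` is written as a sum over `j ∈ range (s/2)`.) -/
theorem claim_Rbs_le_one (b s : ℕ) (hs : 2 ≤ s) (hbs : s ≤ b) :
    (1 / (2 : ℝ) ^ s) *
      ∑ j ∈ Finset.range (s / 2), (Nat.choose s j : ℝ) * ((b : ℝ) / ((b : ℝ) - 1)) ^ (s - j)
      ≤ 1 :=
  claim_Rbs_le_one_general b s hbs
end

section
/- Let b, s be integers with s ≥ 3 and b ≥ s. For odd m with 1 ≤ m ≤ 2s−3, define G(m,s) := Σ_{j=0}^{(m−3)/2} binom(s,j) + Σ_{j=max(0, m−s+1)}^{(m−3)/2} binom(s,j)·h_{s,j}(m) + binom(s,(m−1)/2)·(b/(b−1))^{s−(m−1)/2−1}, where h_{s,j}(m) = binom(s−j−1, m−2j)·b^{s+j−m}/(b−1)^{s−j}. Then G(m,s) ≥ G(m−2,s) for every odd m with 3 ≤ m ≤ 2s−3; that is, G(·,s) is nonincreasing as m decreases over the odd integers from 2s−3 down to 1. -/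
/-!
Write `m = 2k + 3`, `s = k + n + 2`, `B = b - 1`, `w = n + 1`, `X = b / B = 1 + 1/B`.
Dropping the nonnegative `h`-sum of `G(m)`, it suffices that
`S + C(s,k) X^(n+1) ≤ C(s,k) + C(s,k+1) X^n`, where `S = ∑_{j<k} C(s,j) h_{s,j}(2k+1)`.

In the `j`-th term of `S` put `i = k - j ≥ 1`. Then
`h_{s,j}(2k+1) = X^(w-i) C(w+i, 2i+1) / B^(2i+1)`, where `X^(w-i) ≤ X^n ≤ e < 3`,
`6 C(w+i, 2i+1) ≤ w^(2i+1)` and `C(s,j) w^i ≤ C(s,k) k^i`, so the term is at most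
`C(s,k) (w / 2B) ρ^i` with `ρ = k w / B² ≤ 1/4`.
Summing, `S ≤ C(s,k) A` with `A = k w² / B³`.
As `C(s,k+1) = C(s,k) r` with `r = (n+2)/(k+1)`, what remains is `A + X^(n+1) ≤ 1 + r X^n`.
This follows from `A + w/B ≤ r` and the Bernoulli bound `X^n (1 - n/B) ≤ (1 - 1/B²)^n ≤ 1`.
-/

open Finset

/-- `h_{s,j}(m) := (b^{s+j−m}/(b−1)^{s−j})·C(s−j−1, m−2j)`. -/
noncomputable def hSJ (b s j m : ℕ) : ℝ :=
  ((b : ℝ) ^ ((s : ℤ) + (j : ℤ) - (m : ℤ)) / ((b : ℝ) - 1) ^ (s - j)) *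
    (Nat.choose (s - j - 1) (m - 2 * j) : ℝ)

/-- `G(m,s) := Σ_{j=0}^{(m−3)/2} C(s,j) + Σ_{j=max(0,m−s+1)}^{(m−3)/2} C(s,j) h_{s,j}(m)
 + C(s,(m−1)/2) (b/(b−1))^{s−(m−1)/2−1}` for odd `m`.
(The range `0 ≤ j ≤ (m−3)/2` is written as `j ∈ range ((m−1)/2)`, which is empty for `m = 1`,
and the lower bound `max(0, m−s+1) ≤ j` as `m + 1 ≤ s + j`.) -/
noncomputable def G12 (b s m : ℕ) : ℝ :=
  (∑ j ∈ Finset.range ((m - 1) / 2), (Nat.choose s j : ℝ)) +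
  (∑ j ∈ (Finset.range ((m - 1) / 2)).filter (fun j => m + 1 ≤ s + j),
      (Nat.choose s j : ℝ) * hSJ b s j m) +
  (Nat.choose s ((m - 1) / 2) : ℝ) * ((b : ℝ) / ((b : ℝ) - 1)) ^ (s - (m - 1) / 2 - 1)

/-- The factors of the descending factorial pair up as `(w + l) * (w - l) ≤ w ^ 2`. -/
theorem Nat.descFactorial_add_le_pow (w : ℕ) :
    ∀ i : ℕ, (w + i).descFactorial (2 * i + 1) ≤ w ^ (2 * i + 1)
  | 0 => by simp
  | i + 1 => by
    have hsplit : (w + (i + 1)).descFactorial (2 * (i + 1) + 1)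
        = (w + i + 1) * (w - (i + 1)) * (w + i).descFactorial (2 * i + 1) := by
      rw [show w + (i + 1) = w + i + 1 by omega,
        show 2 * (i + 1) + 1 = 2 * i + 1 + 1 + 1 by omega, Nat.succ_descFactorial_succ,
        Nat.descFactorial_succ, show w + i - (2 * i + 1) = w - (i + 1) by omega]
      ring
    have hpair : (w + i + 1) * (w - (i + 1)) ≤ w * w := by
      rcases le_or_gt (i + 1) w with h | h
      · zify [h]; nlinarith
      · simp [Nat.sub_eq_zero_of_le h.le]
    calc (w + (i + 1)).descFactorial (2 * (i + 1) + 1)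
        ≤ w * w * w ^ (2 * i + 1) := by
          rw [hsplit]; exact Nat.mul_le_mul hpair (Nat.descFactorial_add_le_pow w i)
      _ = w ^ (2 * (i + 1) + 1) := by ring

theorem Nat.six_mul_choose_add_le_pow (w : ℕ) {i : ℕ} (hi : 1 ≤ i) :
    6 * (w + i).choose (2 * i + 1) ≤ w ^ (2 * i + 1) :=
  calc 6 * (w + i).choose (2 * i + 1) ≤ (2 * i + 1).factorial * (w + i).choose (2 * i + 1) :=
        Nat.mul_le_mul_right _ (Nat.factorial_le (m := 3) (by omega))
    _ = (w + i).descFactorial (2 * i + 1) := (Nat.descFactorial_eq_factorial_mul_choose _ _).symm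
    _ ≤ w ^ (2 * i + 1) := Nat.descFactorial_add_le_pow w i

theorem Nat.choose_mul_le_choose_succ_mul {s k r : ℕ} (hr : r < k) (hk : k ≤ s) :
    s.choose r * (s + 1 - k) ≤ s.choose (r + 1) * k := by
  refine Nat.le_of_mul_le_mul_right ?_ (Nat.succ_pos r)
  calc s.choose r * (s + 1 - k) * (r + 1) ≤ s.choose r * ((s - r) * k) := by
        rw [mul_assoc]
        exact Nat.mul_le_mul_left _ (Nat.mul_le_mul (by omega) (by omega))
    _ = s.choose (r + 1) * k * (r + 1) := by rw [← mul_assoc, ← Nat.choose_succ_right_eq]; ring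

theorem Nat.choose_sub_mul_pow_le {s k : ℕ} (hk : k ≤ s) :
    ∀ i ≤ k, s.choose (k - i) * (s + 1 - k) ^ i ≤ s.choose k * k ^ i
  | 0, _ => by simp
  | i + 1, hi => by
    have hratio := Nat.choose_mul_le_choose_succ_mul (r := k - (i + 1)) (by omega) hk
    rw [show k - (i + 1) + 1 = k - i by omega] at hratio
    calc s.choose (k - (i + 1)) * (s + 1 - k) ^ (i + 1)
        = s.choose (k - (i + 1)) * (s + 1 - k) * (s + 1 - k) ^ i := by ring
      _ ≤ s.choose (k - i) * k * (s + 1 - k) ^ i := Nat.mul_le_mul_right _ hratio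
      _ = k * (s.choose (k - i) * (s + 1 - k) ^ i) := by ring
      _ ≤ k * (s.choose k * k ^ i) :=
          Nat.mul_le_mul_left _ (Nat.choose_sub_mul_pow_le hk i (by omega))
      _ = s.choose k * k ^ (i + 1) := by ring

theorem one_add_pow_mul_one_sub_le {u : ℝ} (hu0 : 0 ≤ u) (hu1 : u ≤ 1) (n : ℕ) :
    (1 + u) ^ n * (1 - n * u) ≤ 1 := by
  have hbern : 1 - n * u ≤ (1 - u) ^ n := by
    simpa [sub_eq_add_neg] using one_add_mul_le_pow (a := -u) (by linarith) n
  calc (1 + u) ^ n * (1 - n * u) ≤ (1 + u) ^ n * (1 - u) ^ n := by gcongr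
    _ = (1 - u ^ 2) ^ n := by rw [← mul_pow]; ring
    _ ≤ 1 := pow_le_one₀ (by nlinarith) (by nlinarith)

theorem div_sub_one_zpow_le_three {b n : ℕ} {z : ℤ} (hb : 1 < b) (hn : n < b) (hz : z ≤ n) :
    ((b : ℝ) / (b - 1)) ^ z ≤ 3 := by
  have hX : (b : ℝ) / (b - 1) = 1 + ((b - 1 : ℕ) : ℝ)⁻¹ := by
    have : (b : ℝ) - 1 ≠ 0 := by
      have : (1 : ℝ) < b := by exact_mod_cast hb
      linarith
    rw [Nat.cast_sub hb.le, Nat.cast_one]; field_simp; ring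
  have hX1 : 1 ≤ 1 + ((b - 1 : ℕ) : ℝ)⁻¹ := by simp
  calc ((b : ℝ) / (b - 1)) ^ z ≤ ((b : ℝ) / (b - 1)) ^ (n : ℤ) :=
        zpow_le_zpow_right₀ (hX ▸ hX1) hz
    _ = (1 + ((b - 1 : ℕ) : ℝ)⁻¹) ^ n := by rw [zpow_natCast, hX]
    _ ≤ (1 + ((b - 1 : ℕ) : ℝ)⁻¹) ^ (b - 1) := pow_le_pow_right₀ hX1 (by omega)
    _ ≤ Real.exp 1 := Real.one_add_inv_pow_le_exp
    _ ≤ 3 := Real.exp_one_lt_three.le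

theorem sum_range_pow_sub_le {ρ : ℝ} (h0 : 0 ≤ ρ) (h1 : ρ ≤ 1 / 2) (k : ℕ) :
    ∑ j ∈ range k, ρ ^ (k - j) ≤ 2 * ρ := by
  have hreflect : ∑ j ∈ range k, ρ ^ (k - j) = ρ * ∑ j ∈ range k, ρ ^ j := by
    rw [← sum_range_reflect (fun j => ρ ^ j) k, mul_sum]
    refine sum_congr rfl fun j hj => ?_
    rw [← pow_succ', show k - 1 - j + 1 = k - j by have := mem_range.1 hj; omega]
  have hgeom : ∑ j ∈ range k, ρ ^ j ≤ 1 / (1 - ρ) := by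
    have := geom_sum_Ico_le_of_lt_one (m := 0) (n := k) h0 (by linarith)
    rwa [← range_eq_Ico, pow_zero] at this
  rw [hreflect]
  calc ρ * ∑ j ∈ range k, ρ ^ j ≤ ρ * (1 / (1 - ρ)) := by gcongr
    _ ≤ ρ * 2 := by gcongr; rw [div_le_iff₀ (by linarith)]; linarith
    _ = 2 * ρ := mul_comm _ _

theorem add_pow_succ_le_one_add_mul_pow {u r A : ℝ} (n : ℕ) (hu0 : 0 ≤ u) (hu1 : u ≤ 1)
    (hA0 : 0 ≤ A) (hA1 : A ≤ 1) (hr : A + (n + 1) * u ≤ r) :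
    A + (1 + u) ^ (n + 1) ≤ 1 + r * (1 + u) ^ n := by
  have hP1 : 1 ≤ (1 + u) ^ n := one_le_pow₀ (by linarith)
  have hP := one_add_pow_mul_one_sub_le hu0 hu1 n
  rw [pow_succ]
  rcases le_total r (1 + u) with h | h
  · nlinarith [mul_le_mul_of_nonneg_left (show 1 + u - r ≤ 1 - n * u - A by linarith)
      (show 0 ≤ (1 + u) ^ n by linarith), mul_nonneg (sub_nonneg.2 hP1) hA0]
  · nlinarith [mul_le_mul_of_nonneg_left h (show 0 ≤ (1 + u) ^ n by linarith)]

theorem mul_sq_div_cube_add_div_le {k w B : ℝ} (hk : 0 ≤ k) (hw : 1 ≤ w) (hB : k + w ≤ B) :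
    k * w ^ 2 / B ^ 3 + w / B ≤ (w + 1) / (k + 1) := by
  have hB0 : 0 < B := by linarith
  have hmargin : w ^ 2 + k ≤ (w + 1) * B - w * (k + 1) := by
    nlinarith [mul_nonneg (show 0 ≤ w + 1 by linarith) (show 0 ≤ B - k - w by linarith)]
  have hBk : k * (k + 1) ≤ B ^ 2 := by nlinarith
  have hpoly : (k + 1) * (k * w ^ 2 + w * B ^ 2) ≤ (w + 1) * B ^ 3 := by
    nlinarith [mul_le_mul_of_nonneg_left hmargin (sq_nonneg B),
      mul_le_mul_of_nonneg_right hBk (sq_nonneg w), mul_nonneg hk (sq_nonneg B)]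
  rw [show k * w ^ 2 / B ^ 3 + w / B = (k * w ^ 2 + w * B ^ 2) / B ^ 3 by field_simp,
    div_le_div_iff₀ (by positivity) (by linarith)]
  linarith

theorem hSJ_eq {b s j m : ℕ} (hb : 1 < b) (hjs : j ≤ s) (hjm : 2 * j ≤ m) :
    hSJ b s j m = ((b : ℝ) / (b - 1)) ^ ((s : ℤ) + j - m) * (s - j - 1).choose (m - 2 * j)
      / ((b : ℝ) - 1) ^ (m - 2 * j) := by
  have hB : (b : ℝ) - 1 ≠ 0 := by
    have : (1 : ℝ) < b := by exact_mod_cast hb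
    linarith
  have hsplit : ((b : ℝ) - 1) ^ (s - j)
      = ((b : ℝ) - 1) ^ ((s : ℤ) + j - m) * ((b : ℝ) - 1) ^ (m - 2 * j) := by
    rw [← zpow_natCast, ← zpow_natCast, ← zpow_add₀ hB]
    congr 1
    omega
  rw [hSJ, hsplit, div_zpow]
  field_simp

theorem hSJ_nonneg {b : ℕ} (hb : 1 ≤ b) (s j m : ℕ) : 0 ≤ hSJ b s j m := by
  have : 0 ≤ (b : ℝ) - 1 := sub_nonneg.2 (by exact_mod_cast hb)
  unfold hSJ
  positivity

theorem choose_mul_hSJ_le {b k n j : ℕ} (hb : k + n + 2 ≤ b) (hj : j < k) :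
    ((k + n + 2).choose j : ℝ) * hSJ b (k + n + 2) j (2 * k + 1)
      ≤ (k + n + 2).choose k * ((n + 1) / (2 * ((b : ℝ) - 1)))
        * (k * (n + 1) / ((b : ℝ) - 1) ^ 2) ^ (k - j) := by
  obtain ⟨i, rfl⟩ : ∃ i, k = j + i := ⟨k - j, by omega⟩
  have hi : 1 ≤ i := by omega
  set s := j + i + n + 2
  have hX : ((b : ℝ) / (b - 1)) ^ ((s : ℤ) + j - (2 * (j + i) + 1)) ≤ 3 :=
    div_sub_one_zpow_le_three (n := n) (by omega) (by omega) (by push_cast [s]; omega)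
  have hbinom : ((n + 1 + i).choose (2 * i + 1) : ℝ) ≤ ((n : ℝ) + 1) ^ (2 * i + 1) / 6 := by
    rw [le_div_iff₀ (by norm_num), mul_comm]
    exact_mod_cast Nat.six_mul_choose_add_le_pow (n + 1) hi
  have hratio :
      (s.choose j : ℝ) * ((n : ℝ) + 1) ^ i ≤ s.choose (j + i) * ((j + i : ℕ) : ℝ) ^ i := by
    have h := Nat.choose_sub_mul_pow_le (s := s) (k := j + i) (by omega) i (by omega)
    rw [show j + i - i = j by omega, show s + 1 - (j + i) = n + 3 by omega] at h
    calc (s.choose j : ℝ) * ((n : ℝ) + 1) ^ i ≤ s.choose j * ((n + 3 : ℕ) : ℝ) ^ i := by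
          gcongr; push_cast; linarith
      _ ≤ _ := by exact_mod_cast h
  rw [hSJ_eq (by omega) (by omega) (by omega), show s - j - 1 = n + 1 + i by omega,
    show 2 * (j + i) + 1 - 2 * j = 2 * i + 1 by omega, show j + i - j = i by omega]
  have hB : (0 : ℝ) < b - 1 := by
    have : (2 : ℝ) ≤ b := by exact_mod_cast (show 2 ≤ b by omega)
    linarith
  set B : ℝ := b - 1
  set w : ℝ := n + 1
  calc (s.choose j : ℝ) * ((b / B) ^ ((s : ℤ) + j - (2 * (j + i) + 1))
        * ((n + 1 + i).choose (2 * i + 1) : ℝ) / B ^ (2 * i + 1))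
      ≤ s.choose j * (3 * (w ^ (2 * i + 1) / 6) / B ^ (2 * i + 1)) := by gcongr
    _ = s.choose j * w ^ i * (w ^ (i + 1) / (2 * B ^ (2 * i + 1))) := by
        field_simp
        ring
    _ ≤ s.choose (j + i) * ((j + i : ℕ) : ℝ) ^ i * (w ^ (i + 1) / (2 * B ^ (2 * i + 1))) :=
        by gcongr
    _ = _ := by
        rw [div_pow, mul_pow, ← pow_mul]
        field_simp
        ring

theorem sum_choose_mul_hSJ_le {b k n : ℕ} (hb : k + n + 2 ≤ b) :
    ∑ j ∈ range k, ((k + n + 2).choose j : ℝ) * hSJ b (k + n + 2) j (2 * k + 1)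
      ≤ (k + n + 2).choose k * (k * (n + 1) ^ 2 / ((b : ℝ) - 1) ^ 3) := by
  have hkB : (k : ℝ) + (n + 1) ≤ b - 1 := by
    have : ((k + n + 2 : ℕ) : ℝ) ≤ b := by exact_mod_cast hb
    push_cast at this
    linarith
  have hB : (0 : ℝ) < b - 1 := by linarith
  set B : ℝ := b - 1
  set ρ : ℝ := k * (n + 1) / B ^ 2 with hρ_def
  have hρ : ρ ≤ 1 / 2 := by
    rw [div_le_iff₀ (by positivity)]
    nlinarith [sq_nonneg ((k : ℝ) - (n + 1))]
  calc ∑ j ∈ range k, ((k + n + 2).choose j : ℝ) * hSJ b (k + n + 2) j (2 * k + 1)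
      ≤ ∑ j ∈ range k, (k + n + 2).choose k * ((n + 1) / (2 * B)) * ρ ^ (k - j) :=
        sum_le_sum fun j hj => choose_mul_hSJ_le hb (mem_range.1 hj)
    _ = (k + n + 2).choose k * ((n + 1) / (2 * B)) * ∑ j ∈ range k, ρ ^ (k - j) := by
        rw [mul_sum]
    _ ≤ (k + n + 2).choose k * ((n + 1) / (2 * B)) * (2 * ρ) := by
        gcongr
        exact sum_range_pow_sub_le (by positivity) hρ k
    _ = _ := by
        rw [hρ_def]
        field_simp

theorem sum_choose_mul_hSJ_add_le {b k n : ℕ} (hb : k + n + 2 ≤ b) :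
    ∑ j ∈ range k, ((k + n + 2).choose j : ℝ) * hSJ b (k + n + 2) j (2 * k + 1)
        + (k + n + 2).choose k * ((b : ℝ) / (b - 1)) ^ (n + 1)
      ≤ (k + n + 2).choose k + (k + n + 2).choose (k + 1) * ((b : ℝ) / (b - 1)) ^ n := by
  have hkB : (k : ℝ) + (n + 1) ≤ b - 1 := by
    have : ((k + n + 2 : ℕ) : ℝ) ≤ b := by exact_mod_cast hb
    push_cast at this
    linarith
  have hB : (1 : ℝ) ≤ b - 1 := by linarith
  have hchoose : ((k + n + 2).choose (k + 1) : ℝ)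
      = (k + n + 2).choose k * ((n + 1 + 1) / (k + 1)) := by
    have h := Nat.choose_succ_right_eq (k + n + 2) k
    rw [show k + n + 2 - k = n + 2 by omega] at h
    have h' : ((k + n + 2).choose (k + 1) : ℝ) * (k + 1) = (k + n + 2).choose k * (n + 2) := by
      exact_mod_cast h
    field_simp
    linarith
  set B : ℝ := b - 1
  set c : ℝ := ((k + n + 2).choose k : ℝ)
  set A : ℝ := k * (n + 1) ^ 2 / B ^ 3
  have hX : (b : ℝ) / B = 1 + 1 / B := by field_simp; ring
  have hA1 : A ≤ 1 := by
    rw [div_le_one (by positivity)]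
    calc (k : ℝ) * (n + 1) ^ 2 ≤ B * B ^ 2 := by gcongr <;> linarith
      _ = B ^ 3 := by ring
  have hbudget : A + (n + 1) * (1 / B) ≤ (n + 1 + 1) / (k + 1) := by
    rw [mul_one_div]
    exact mul_sq_div_cube_add_div_le (by positivity) (by linarith) hkB
  calc ∑ j ∈ range k, ((k + n + 2).choose j : ℝ) * hSJ b (k + n + 2) j (2 * k + 1)
        + c * ((b : ℝ) / B) ^ (n + 1)
      ≤ c * A + c * ((b : ℝ) / B) ^ (n + 1) := by
        gcongr
        exact sum_choose_mul_hSJ_le hb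
    _ = c * (A + (1 + 1 / B) ^ (n + 1)) := by rw [hX]; ring
    _ ≤ c * (1 + (n + 1 + 1) / (k + 1) * (1 + 1 / B) ^ n) :=
        mul_le_mul_of_nonneg_left (add_pow_succ_le_one_add_mul_pow n (by positivity)
          (by rw [div_le_one (by linarith)]; exact hB) (by positivity) hA1 hbudget) (by positivity)
    _ = _ := by rw [hchoose, hX]; ring

theorem G12_odd_le {b : ℕ} (hb : 1 ≤ b) (s k : ℕ) :
    G12 b s (2 * k + 1) ≤ ∑ j ∈ range k, (s.choose j : ℝ)
      + ∑ j ∈ range k, (s.choose j : ℝ) * hSJ b s j (2 * k + 1)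
      + s.choose k * ((b : ℝ) / (b - 1)) ^ (s - k - 1) := by
  rw [G12, show (2 * k + 1 - 1) / 2 = k by omega]
  gcongr
  · exact fun j _ _ => mul_nonneg (Nat.cast_nonneg _) (hSJ_nonneg hb _ _ _)
  · exact filter_subset _ _

theorem le_G12_odd {b : ℕ} (hb : 1 ≤ b) (s k : ℕ) :
    ∑ j ∈ range k, (s.choose j : ℝ) + s.choose k * ((b : ℝ) / (b - 1)) ^ (s - k - 1)
      ≤ G12 b s (2 * k + 1) := by
  rw [G12, show (2 * k + 1 - 1) / 2 = k by omega]
  have : 0 ≤ ∑ j ∈ (range k).filter (fun j => 2 * k + 1 + 1 ≤ s + j),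
      (s.choose j : ℝ) * hSJ b s j (2 * k + 1) :=
    sum_nonneg fun j _ => mul_nonneg (Nat.cast_nonneg _) (hSJ_nonneg hb _ _ _)
  linarith

theorem claim_G12_monotone_general (b s : ℕ) (hbs : s ≤ b) :
    ∀ m : ℕ, Odd m → 3 ≤ m → m ≤ 2 * s - 3 → G12 b s (m - 2) ≤ G12 b s m := by
  rintro m ⟨t, rfl⟩ h3 hm
  obtain ⟨k, rfl⟩ : ∃ k, t = k + 1 := ⟨t - 1, by omega⟩
  obtain ⟨n, rfl⟩ : ∃ n, s = k + n + 2 := ⟨s - k - 2, by omega⟩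
  have hb : 1 ≤ b := by omega
  have hlow := G12_odd_le hb (k + n + 2) k
  have hup := le_G12_odd hb (k + n + 2) (k + 1)
  rw [show k + n + 2 - k - 1 = n + 1 by omega] at hlow
  rw [show k + n + 2 - (k + 1) - 1 = n by omega, sum_range_succ] at hup
  rw [show 2 * (k + 1) + 1 - 2 = 2 * k + 1 by omega]
  linarith [sum_choose_mul_hSJ_add_le hbs]

/-- For integers `s ≥ 3`, `b ≥ s`, and every odd `m` with `3 ≤ m ≤ 2s−3`,
`G(m,s) ≥ G(m−2,s)`; i.e. `G(·,s)` is decreasing over odd `m` from `2s−3` down to `1`. -/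
theorem claim_G12_monotone (b s : ℕ) (hs : 3 ≤ s) (hbs : s ≤ b) :
    ∀ m : ℕ, Odd m → 3 ≤ m → m ≤ 2 * s - 3 → G12 b s (m - 2) ≤ G12 b s m :=
  claim_G12_monotone_general b s hbs
end

section
/- Let w, ℓ be integers with 2 ≤ w ≤ ℓ. Let X = (x_{i,j}) be a w × ℓ real matrix with x_{i,j} ≥ 0 and x_{i,j} > 0 if and only if i + j ≤ ℓ + 1. Assume X satisfies the decreasing-row-sums condition Σ_{j=1}^{ℓ} x_{1,j} ≥ Σ_{j=1}^{ℓ−1} x_{2,j} ≥ ⋯ ≥ Σ_{j=1}^{ℓ−w+1} x_{w,j}, and the increasing-within-column condition x_{1,j} ≤ x_{2,j} ≤ ⋯ ≤ x_{min(w, ℓ−j+1), j} for each j = 1,…,ℓ. Let A = (α_{i,j}) be a w × ℓ weight matrix, i.e. α_{i,j} ≥ 0, Σ_{i=1}^{w} α_{i,j} = 1 for every j, and the partial column sums A_{i,j} := Σ_{k=1}^{i} α_{k,j} satisfy A_{i,j} ≥ A_{i,j+1} for all 1 ≤ i ≤ w and 1 ≤ j ≤ ℓ−1. Then Σ_{i=1}^{w}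 Σ_{j=1}^{ℓ−i+1} α_{i,j} x_{i,j} ≤ Σ_{j=1}^{ℓ} x_{1,j}. -/
/-!
Extend every row of `X` by zeros to length `ℓ` and write `A i j` for the partial column sums of
the weights. Summation by parts down each column, using `A w j = 1`, gives
`∑ j, x 1 j - ∑ᵢⱼ α i j * x i j = ∑_{i < w} ∑ⱼ (1 - A i j) * (x i j - x (i+1) j)`.
For fixed `i < w` the differences `x i j - x (i+1) j` vanish beyond `m = ℓ - i + 1`, are `≤ 0`
before `m`, and sum to `≥ 0` over `j ≤ m` by the row-sum condition; since `1 - A i j` increases in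
`j` and `1 - A i m ≥ 0`, each inner sum dominates `(1 - A i m) * ∑_{j ≤ m} (x i j - x (i+1) j) ≥ 0`.
-/

open Finset

lemma sum_Icc_one_eq_of_eq_zero {M : Type*} [AddCommMonoid M] (f : ℕ → M) {m n : ℕ}
    (hmn : m ≤ n) (hf : ∀ j, m < j → j ≤ n → f j = 0) :
    ∑ j ∈ Icc 1 m, f j = ∑ j ∈ Icc 1 n, f j :=
  sum_subset (Icc_subset_Icc_right hmn) fun j hj hjm => by
    simp only [mem_Icc, not_and, not_le] at hj hjm
    exact hf j (hjm hj.1) hj.2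

lemma sum_Icc_one_by_parts (f g : ℕ → ℝ) {n : ℕ} (hn : 1 ≤ n) :
    ∑ i ∈ Icc 1 n, f i * g i =
      (∑ i ∈ Icc 1 n, f i) * g n + ∑ i ∈ Ico 1 n, (∑ k ∈ Icc 1 i, f k) * (g i - g (i + 1)) := by
  induction n, hn using Nat.le_induction with
  | base => simp
  | succ n hn ih =>
    rw [sum_Icc_succ_top (by omega), sum_Icc_succ_top (by omega), sum_Ico_succ_top hn, ih]
    ring

lemma sum_Icc_one_mul_eq_sub_sum (f g : ℕ → ℝ) {n : ℕ} (hn : 1 ≤ n)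
    (hf : ∑ i ∈ Icc 1 n, f i = 1) :
    ∑ i ∈ Icc 1 n, f i * g i =
      g 1 - ∑ i ∈ Ico 1 n, (1 - ∑ k ∈ Icc 1 i, f k) * (g i - g (i + 1)) := by
  have htel : ∑ i ∈ Ico 1 n, (g i - g (i + 1)) = g 1 - g n := by
    rw [← neg_sub, ← sum_Ico_sub g hn, ← sum_neg_distrib]
    simp only [neg_sub]
  simp only [sum_Icc_one_by_parts f g hn, hf, sub_mul, one_mul, sum_sub_distrib, htel]
  ring

lemma sum_Icc_one_mul_nonneg {a d : ℕ → ℝ} {m : ℕ} (ha : MonotoneOn a (Set.Icc 1 m))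
    (ham : 0 ≤ a m) (hd : ∀ j ∈ Ico 1 m, d j ≤ 0) (hsum : 0 ≤ ∑ j ∈ Icc 1 m, d j) :
    0 ≤ ∑ j ∈ Icc 1 m, a j * d j :=
  calc 0 ≤ a m * ∑ j ∈ Icc 1 m, d j := mul_nonneg ham hsum
    _ = ∑ j ∈ Icc 1 m, a m * d j := mul_sum _ _ _
    _ ≤ ∑ j ∈ Icc 1 m, a j * d j := sum_le_sum fun j hj => by
      obtain ⟨h1j, hjm⟩ := mem_Icc.1 hj
      rcases hjm.lt_or_eq with hjm | rfl
      · exact mul_le_mul_of_nonpos_right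
          (ha ⟨h1j, hjm.le⟩ ⟨h1j.trans hjm.le, le_rfl⟩ hjm.le) (hd j (mem_Ico.2 ⟨h1j, hjm⟩))
      · rfl

/-- Weighted-sums optimization lemma: let `2 ≤ w ≤ l`, let `x` be a `w × l` matrix
(1-based indices) of nonnegative reals with `x i j > 0 ↔ i + j ≤ l + 1`, satisfying the
decreasing-row-sums condition `Σ_{j=1}^{l-i+1} x i j` decreasing in `i`, and the
increasing-within-column condition `x 1 j ≤ x 2 j ≤ ⋯ ≤ x (min w (l-j+1)) j`. Let `α` be a
`w × l` weight matrix: nonnegative entries with unit column sums whose partial column sums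
`A_{i,j} = Σ_{k=1}^i α k j` satisfy `A_{i,j} ≥ A_{i,j+1}`. Then
`Σ_{i=1}^{w} Σ_{j=1}^{l-i+1} α i j * x i j ≤ Σ_{j=1}^{l} x 1 j`. -/
theorem claim_weighted_sums (w l : ℕ) (hw : 2 ≤ w) (hwl : w ≤ l)
    (x α : ℕ → ℕ → ℝ)
    (hx0 : ∀ i j, 1 ≤ i → i ≤ w → 1 ≤ j → j ≤ l → 0 ≤ x i j)
    (hxpos : ∀ i j, 1 ≤ i → i ≤ w → 1 ≤ j → j ≤ l → (0 < x i j ↔ i + j ≤ l + 1))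
    (hrow : ∀ i, 1 ≤ i → i + 1 ≤ w →
      ∑ j ∈ Finset.Icc 1 (l - (i + 1) + 1), x (i + 1) j ≤
        ∑ j ∈ Finset.Icc 1 (l - i + 1), x i j)
    (hcol : ∀ i j, 1 ≤ i → i + 1 ≤ min w (l - j + 1) → 1 ≤ j → j ≤ l →
      x i j ≤ x (i + 1) j)
    (hα0 : ∀ i j, 1 ≤ i → i ≤ w → 1 ≤ j → j ≤ l → 0 ≤ α i j)
    (hαsum : ∀ j, 1 ≤ j → j ≤ l → ∑ i ∈ Finset.Icc 1 w, α i j = 1)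
    (hαdec : ∀ i j, 1 ≤ i → i ≤ w → 1 ≤ j → j + 1 ≤ l →
      ∑ k ∈ Finset.Icc 1 i, α k (j + 1) ≤ ∑ k ∈ Finset.Icc 1 i, α k j) :
    ∑ i ∈ Finset.Icc 1 w, ∑ j ∈ Finset.Icc 1 (l - i + 1), α i j * x i j ≤
      ∑ j ∈ Finset.Icc 1 l, x 1 j := by
  have hz : ∀ i j, 1 ≤ i → i ≤ w → 1 ≤ j → j ≤ l → l + 1 < i + j → x i j = 0 :=
    fun i j h1i hiw h1j hjl hij => (hx0 i j h1i hiw h1j hjl).eq_of_not_lt' fun hpos => by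
      have := (hxpos i j h1i hiw h1j hjl).1 hpos
      omega
  set A : ℕ → ℕ → ℝ := fun i j => ∑ k ∈ Icc 1 i, α k j
  have hcols : ∀ j ∈ Icc 1 l, ∑ i ∈ Icc 1 w, α i j * x i j =
      x 1 j - ∑ i ∈ Ico 1 w, (1 - A i j) * (x i j - x (i + 1) j) := fun j hj =>
    have ⟨h1j, hjl⟩ := mem_Icc.1 hj
    sum_Icc_one_mul_eq_sub_sum (α · j) (x · j) (by omega) (hαsum j h1j hjl)
  have hrows : ∀ i ∈ Ico 1 w, 0 ≤ ∑ j ∈ Icc 1 l, (1 - A i j) * (x i j - x (i + 1) j) := by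
    intro i hi
    obtain ⟨h1i, hiw⟩ := mem_Ico.1 hi
    set m := l - i + 1
    have h1m : 1 ≤ m := by omega
    have hml : m ≤ l := by omega
    rw [← sum_Icc_one_eq_of_eq_zero _ hml fun j hmj hjl => by
      rw [hz i j h1i hiw.le (by omega) hjl (by omega),
        hz (i + 1) j (by omega) hiw (by omega) hjl (by omega), sub_self, mul_zero]]
    refine sum_Icc_one_mul_nonneg ?_ ?_ (fun j hj => ?_) ?_
    · refine monotoneOn_of_le_add_one Set.ordConnected_Icc fun j _ hj hj1 => ?_
      have := hαdec i j h1i hiw.le hj.1 (by have := hj1.2; omega)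
      linarith
    · have : A i m ≤ 1 := hαsum m h1m hml ▸ sum_le_sum_of_subset_of_nonneg
        (Icc_subset_Icc_right hiw.le) fun k hk _ =>
          hα0 k m (mem_Icc.1 hk).1 (mem_Icc.1 hk).2 h1m hml
      linarith
    · obtain ⟨h1j, hjm⟩ := mem_Ico.1 hj
      have := hcol i j h1i (le_min (by omega) (by omega)) h1j (by omega)
      linarith
    · rw [sum_sub_distrib, sub_nonneg,
        ← sum_Icc_one_eq_of_eq_zero (x (i + 1)) (m := l - (i + 1) + 1) (by omega)
          fun j hj hjm => hz (i + 1) j (by omega) hiw (by omega) (by omega) (by omega)]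
      exact hrow i h1i hiw
  calc ∑ i ∈ Icc 1 w, ∑ j ∈ Icc 1 (l - i + 1), α i j * x i j
      = ∑ j ∈ Icc 1 l, ∑ i ∈ Icc 1 w, α i j * x i j := by
        rw [← sum_comm]
        refine sum_congr rfl fun i hi => ?_
        obtain ⟨h1i, hiw⟩ := mem_Icc.1 hi
        refine sum_Icc_one_eq_of_eq_zero _ (by omega) fun j hij hjl => ?_
        rw [hz i j h1i hiw (by omega) hjl (by omega), mul_zero]
    _ ≤ ∑ j ∈ Icc 1 l, x 1 j := by
        rw [sum_congr rfl hcols, sum_sub_distrib, sum_comm, sub_le_self_iff]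
        exact sum_nonneg hrows
end

section
/- Let b, s, k be integers with b ≥ s ≥ 2 and 0 ≤ k < s, and set Q(b,k,s) := Σ_{j=0}^{k} (−1)^j · binom(s,j) · (b^{k−j} − 1). Then: Q(b,k,s) ≤ b^k · ((b−1)/b)^s if k is even; Q(b,k,s) ≤ b^k · ((b−1)/b)^s + binom(s−1,k) if k > 1 is odd; and Q(b,k,s) = b − 1 if k = 1. -/
/-!
Expanding `b ^ k * (1 - 1/b) ^ s` by the binomial theorem gives
`∑_{j ≤ s} (-1)^j C(s,j) b^(k-j)`, whose terms with `j ≤ k` are the first half of `Q(b,k,s)`;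
the second half, `∑_{j ≤ k} (-1)^j C(s,j)`, equals `(-1)^k C(s-1,k)`. Hence
`Q = b^k ((b-1)/b)^s + (-1)^k (T - C(s-1,k))`, where `T = binomialTail b s k` is the alternating
sum of the remaining terms `C(s,j)/b^(j-k)`, `j > k`. Since `C(s,j+1) ≤ s C(s,j) ≤ b C(s,j)`,
these terms decrease, so `0 ≤ T ≤ C(s,k+1)/b ≤ C(s-1,k)`, which gives both inequalities.
-/

open Finset

/-- `Q(b,k,s) := Σ_{j=0}^{k} (−1)^j C(s,j) (b^{k−j} − 1)`. -/
noncomputable def Qbks (b k s : ℕ) : ℝ :=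
  ∑ j ∈ Finset.range (k + 1),
    (-1 : ℝ) ^ j * (Nat.choose s j : ℝ) * ((b : ℝ) ^ (k - j) - 1)

theorem sum_range_neg_one_pow_mul_mem_Icc_of_antitone {g : ℕ → ℝ} (hg : Antitone g)
    (hg0 : ∀ i, 0 ≤ g i) (n : ℕ) : ∑ i ∈ range n, (-1) ^ i * g i ∈ Set.Icc 0 (g 0) := by
  induction n generalizing g with
  | zero => simpa using hg0 0
  | succ n ih =>
    obtain ⟨h_nonneg, h_le⟩ :=
      ih (g := fun i => g (i + 1)) (fun _ _ h => hg (by omega)) (fun _ => hg0 _)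
    have h10 : g 1 ≤ g 0 := hg zero_le_one
    rw [sum_range_succ']
    simp only [pow_succ, mul_neg_one, neg_mul, sum_neg_distrib, pow_zero, one_mul]
    constructor <;> linarith

theorem Nat.choose_succ_le_mul_choose (n k : ℕ) : n.choose (k + 1) ≤ n * n.choose k := by
  have h := Nat.choose_succ_right_eq n k
  calc n.choose (k + 1) ≤ n.choose (k + 1) * (k + 1) := Nat.le_mul_of_pos_right _ k.succ_pos
    _ = n.choose k * (n - k) := h
    _ ≤ n * n.choose k := by rw [mul_comm]; gcongr; omega

theorem Nat.choose_succ_le_mul_choose_sub_one (n k : ℕ) :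
    n.choose (k + 1) ≤ n * (n - 1).choose k := by
  cases n with
  | zero => simp
  | succ n =>
    rw [Nat.add_sub_cancel, Nat.add_one_mul_choose_eq]
    exact Nat.le_mul_of_pos_right _ k.succ_pos

theorem sum_range_neg_one_pow_mul_choose (n k : ℕ) :
    ∑ j ∈ range (k + 1), (-1 : ℝ) ^ j * ((n + 1).choose j : ℝ)
      = (-1) ^ k * (n.choose k : ℝ) := by
  exact_mod_cast Int.alternating_sum_range_choose_eq_choose

theorem mul_one_sub_inv_pow_eq_sum (x : ℝ) (k s : ℕ) :
    x ^ k * (1 - x⁻¹) ^ s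
      = ∑ j ∈ range (s + 1), (-1) ^ j * (s.choose j : ℝ) * (x ^ k * x⁻¹ ^ j) := by
  rw [sub_eq_neg_add, add_pow, mul_sum]
  refine sum_congr rfl fun j _ => ?_
  rw [neg_pow]
  ring

noncomputable def binomialTail (x : ℝ) (s k : ℕ) : ℝ :=
  ∑ i ∈ range (s - k), (-1) ^ i * ((s.choose (k + 1 + i) : ℝ) / x ^ (i + 1))

theorem sum_range_neg_one_pow_mul_choose_mul_pow_sub {x : ℝ} (hx : x ≠ 0) {k s : ℕ}
    (hks : k ≤ s) :
    ∑ j ∈ range (k + 1), (-1) ^ j * (s.choose j : ℝ) * x ^ (k - j)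
      = x ^ k * ((x - 1) / x) ^ s + (-1) ^ k * binomialTail x s k := by
  rw [sub_div, div_self hx, one_div, mul_one_sub_inv_pow_eq_sum,
    show s + 1 = (k + 1) + (s - k) by omega, sum_range_add _ (k + 1) (s - k), binomialTail, mul_sum,
    add_assoc, ← sum_add_distrib]
  have head : ∀ j ∈ range (k + 1), (-1) ^ j * (s.choose j : ℝ) * x ^ (k - j)
      = (-1) ^ j * (s.choose j : ℝ) * (x ^ k * x⁻¹ ^ j) := fun j hj => by
    rw [pow_sub₀ _ hx (Nat.lt_succ_iff.mp (mem_range.mp hj)), inv_pow]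
  have tail : ∀ i ∈ range (s - k),
      (-1) ^ (k + 1 + i) * (s.choose (k + 1 + i) : ℝ) * (x ^ k * x⁻¹ ^ (k + 1 + i))
        + (-1) ^ k * ((-1) ^ i * ((s.choose (k + 1 + i) : ℝ) / x ^ (i + 1))) = 0 := fun i _ => by
    rw [inv_pow]
    field_simp
    ring
  rw [sum_congr rfl head, sum_eq_zero tail, add_zero]

theorem binomialTail_mem_Icc {x : ℝ} {s : ℕ} (hx : 0 < x) (hsx : (s : ℝ) ≤ x) (k : ℕ) :
    binomialTail x s k ∈ Set.Icc 0 ((s - 1).choose k : ℝ) := by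
  have hstep : ∀ j, (s.choose (j + 1) : ℝ) ≤ x * s.choose j := fun j =>
    calc (s.choose (j + 1) : ℝ) ≤ s * s.choose j := by
          exact_mod_cast Nat.choose_succ_le_mul_choose s j
      _ ≤ x * s.choose j := by gcongr
  have hanti : Antitone fun i => (s.choose (k + 1 + i) : ℝ) / x ^ (i + 1) :=
    antitone_nat_of_succ_le fun i => by
      rw [div_le_div_iff₀ (by positivity) (by positivity)]
      calc (s.choose (k + 1 + i + 1) : ℝ) * x ^ (i + 1)
          ≤ x * s.choose (k + 1 + i) * x ^ (i + 1) := by gcongr; exact hstep _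
        _ = s.choose (k + 1 + i) * x ^ (i + 1 + 1) := by ring
  obtain ⟨h_nonneg, h_le⟩ :=
    sum_range_neg_one_pow_mul_mem_Icc_of_antitone hanti (fun _ => by positivity) (s - k)
  refine ⟨h_nonneg, h_le.trans ?_⟩
  rw [add_zero, pow_one, div_le_iff₀ hx]
  calc (s.choose (k + 1) : ℝ) ≤ s * (s - 1).choose k := by
        exact_mod_cast Nat.choose_succ_le_mul_choose_sub_one s k
    _ ≤ _ := by rw [mul_comm]; gcongr

theorem Qbks_eq {b k s : ℕ} (hb : 0 < b) (hks : k < s) :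
    Qbks b k s = (b : ℝ) ^ k * (((b : ℝ) - 1) / b) ^ s
      + (-1) ^ k * (binomialTail b s k - ((s - 1).choose k : ℝ)) := by
  obtain ⟨n, rfl⟩ : ∃ n, s = n + 1 := ⟨s - 1, by omega⟩
  simp only [Qbks, mul_sub, mul_one, sum_sub_distrib, Nat.add_sub_cancel]
  rw [sum_range_neg_one_pow_mul_choose,
    sum_range_neg_one_pow_mul_choose_mul_pow_sub (by positivity) hks.le]
  ring

theorem claim_Qbks_bound_general (b s k : ℕ) (hbs : s ≤ b) (hk : k < s) :
    (Even k → Qbks b k s ≤ (b : ℝ) ^ k * (((b : ℝ) - 1) / (b : ℝ)) ^ s) ∧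
    (Odd k → 1 < k →
      Qbks b k s ≤ (b : ℝ) ^ k * (((b : ℝ) - 1) / (b : ℝ)) ^ s + (Nat.choose (s - 1) k : ℝ)) ∧
    (k = 1 → Qbks b k s = (b : ℝ) - 1) := by
  have hb : 0 < b := by omega
  obtain ⟨h_nonneg, h_le⟩ :=
    binomialTail_mem_Icc (k := k) (Nat.cast_pos.mpr hb) (Nat.cast_le.mpr hbs)
  refine ⟨fun heven => ?_, fun hodd _ => ?_, fun hk1 => ?_⟩
  · rw [Qbks_eq hb hk, heven.neg_one_pow]
    linarith
  · rw [Qbks_eq hb hk, hodd.neg_one_pow]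
    linarith
  · subst hk1
    simp [Qbks, sum_range_succ]

/-- For integers `b ≥ s ≥ 2` and `0 ≤ k < s`:
`Q(b,k,s) ≤ b^k ((b−1)/b)^s` if `k` is even;
`Q(b,k,s) ≤ b^k ((b−1)/b)^s + C(s−1,k)` if `k > 1` is odd;
and `Q(b,k,s) = b − 1` if `k = 1`. -/
theorem claim_Qbks_bound (b s k : ℕ) (hs : 2 ≤ s) (hbs : s ≤ b) (hk : k < s) :
    (Even k → Qbks b k s ≤ (b : ℝ) ^ k * (((b : ℝ) - 1) / (b : ℝ)) ^ s) ∧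
    (Odd k → 1 < k →
      Qbks b k s ≤ (b : ℝ) ^ k * (((b : ℝ) - 1) / (b : ℝ)) ^ s + (Nat.choose (s - 1) k : ℝ)) ∧
    (k = 1 → Qbks b k s = (b : ℝ) - 1) :=
  claim_Qbks_bound_general b s k hbs hk
end
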